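/- Let M ⊂ GL_d be the semistandard Levi subgroup corresponding to a partition {1,…,d} = O_1 ⊔ ⋯ ⊔ O_t, and let ν ∈ W·μ₀ be the M-dominant element of the orbit O_ν = O_i. Then Adm^G(O_ν) := { w ∈ Adm^G(μ₀) : S(w) ⊆ O_ν } equals Adm^M(ν), the ν-admissible subset of the extended affine Weyl group of M (defined via the Bruhat order from the M-antidominant base alcove whose closure contains the origin). -/

import Mathlib

/-! Extended affine Weyl group `W̃ = ℤ^d ⋊ S_d` of `GL_d`, with the Bruhat order
defined via the base alcove contained in the antidominant Weyl chamber. -/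

noncomputable section

/-- An element `t_λ ⋅ w̄` of the extended affine Weyl group `ℤ^d ⋊ S_d` of `GL_d`. -/
@[ext]
structure AffW (d : ℕ) where
  t : Fin d → ℤ
  w : Equiv.Perm (Fin d)

namespace AffW

variable {d : ℕ}

instance : Mul (AffW d) := ⟨fun a b => ⟨fun i => a.t i + b.t (a.w⁻¹ i), a.w * b.w⟩⟩
instance : One (AffW d) := ⟨⟨0, 1⟩⟩

/-- The translation element `t_λ`. -/
def transl (lam : Fin d → ℤ) : AffW d := ⟨lam, 1⟩

/-- An element of the finite Weyl group `S_d`, viewed in the extended affine Weyl group. -/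
def finW (w : Equiv.Perm (Fin d)) : AffW d := ⟨0, w⟩

/-- The permutation action of the finite Weyl group on (co)weights. -/
def pact (w : Equiv.Perm (Fin d)) (v : Fin d → ℤ) : Fin d → ℤ := fun i => v (w⁻¹ i)

/-- The affine action of the extended affine Weyl group on `ℚ^d`. -/
def act (x : AffW d) (v : Fin d → ℚ) : Fin d → ℚ := fun i => (x.t i : ℚ) + v (x.w⁻¹ i)

/-- The affine action on the coweight lattice `ℤ^d`. -/
def actZ (x : AffW d) (v : Fin d → ℤ) : Fin d → ℤ := fun i => x.t i + v (x.w⁻¹ i)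

/-- The barycenter of the base alcove `{v : v_0 < v_1 < ⋯ < v_{d-1} < v_0 + 1}`,
which is contained in the antidominant Weyl chamber. -/
def base (d : ℕ) : Fin d → ℚ := fun i => -(((d : ℚ) - 1 - (i : ℚ)) / (d : ℚ))

/-- The affine root hyperplane `v_i - v_j = k` separates the base alcove from its
transform under `x`. -/
def Separates (x : AffW d) (i j : Fin d) (k : ℤ) : Prop :=
  (base d i - base d j - (k : ℚ)) * (act x (base d) i - act x (base d) j - (k : ℚ)) < 0

/-- The length of `x`, relative to a set of roots singled out by the relation `R`
(for `GL_d` itself take `R = ⊤`; for a Levi `M`, `R i j` means `e_i - e_j` is a root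
of `M`): the number of affine root hyperplanes separating the base alcove from its
transform under `x`. -/
noncomputable def lenR (R : Fin d → Fin d → Prop) (x : AffW d) : ℕ :=
  Set.ncard {p : Fin d × Fin d × ℤ | p.1 < p.2.1 ∧ R p.1 p.2.1 ∧ Separates x p.1 p.2.1 p.2.2}

/-- The length function on the extended affine Weyl group of `GL_d`. -/
noncomputable def len (x : AffW d) : ℕ := lenR (fun _ _ => True) x

/-- Affine reflections (in hyperplanes `v_i - v_j = k` with `R i j`). -/
def IsReflR (R : Fin d → Fin d → Prop) (r : AffW d) : Prop :=
  ∃ (i j : Fin d) (k : ℤ), i ≠ j ∧ R i j ∧ r.w = Equiv.swap i j ∧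
    r.t = k • (Pi.single i (1 : ℤ) - Pi.single j 1)

/-- Affine reflections for `GL_d`. -/
def IsRefl (r : AffW d) : Prop := IsReflR (fun _ _ => True) r

/-- The Bruhat order (relative to `R`): `x ≤ y` iff `x` is obtained from `y` by
successive right multiplications by affine reflections, each strictly decreasing
the length. -/
def bleR (R : Fin d → Fin d → Prop) (x y : AffW d) : Prop :=
  Relation.ReflTransGen
    (fun u v => (∃ r, IsReflR R r ∧ u = v * r) ∧ lenR R u < lenR R v) x y

/-- The Bruhat order on the extended affine Weyl group of `GL_d`, defined via the
base alcove in the antidominant chamber. -/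
def ble (x y : AffW d) : Prop := bleR (fun _ _ => True) x y

/-- The `μ`-admissible set `Adm(μ) = { x : x ≤ t_λ for some λ ∈ Wμ }`. -/
def Adm (μ : Fin d → ℤ) : Set (AffW d) :=
  {x | ∃ σ : Equiv.Perm (Fin d), ble x (transl (pact σ μ))}

/-- The Drinfeld coweight `μ₀ = (1,0,…,0)`. -/
def mu0 (d : ℕ) [NeZero d] : Fin d → ℤ := Pi.single 0 1

/-- The set of critical indices `S(w) = { j : w ≤ t_{e_j} }`. -/
def crit (x : AffW d) : Set (Fin d) := {j | ble x (transl (Pi.single j 1))}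

open Fin.NatCast in
/-- The length-zero element `τ = t_{e_d} ⋅ (d d−1 ⋯ 1)` of `Adm(μ₀)`. -/
def tau (d : ℕ) [NeZero d] : AffW d :=
  transl (Pi.single ((d - 1 : ℕ) : Fin d) 1) * finW (List.finRange d).reverse.formPerm

/-- The negative `ω̄_j = -ω_j` of the `j`-th fundamental coweight of `GL_d`. -/
def omb (d j : ℕ) : Fin d → ℤ := fun i => if (i : ℕ) < j then -1 else 0

end AffW
namespace AffW

variable {d : ℕ}

/-! ### Basic group algebra -/

lemma mul_t (a b : AffW d) : (a * b).t = fun i => a.t i + b.t (a.w⁻¹ i) := rfl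
lemma mul_w (a b : AffW d) : (a * b).w = a.w * b.w := rfl
lemma one_t : (1 : AffW d).t = 0 := rfl
lemma one_w : (1 : AffW d).w = 1 := rfl

/-- Explicit inverse. -/
def ainv (x : AffW d) : AffW d := ⟨fun i => -(x.t (x.w i)), x.w⁻¹⟩

lemma mul_ainv (x : AffW d) : x * ainv x = 1 := by
  ext i
  · simp [mul_t, ainv, one_t]
  · simp [mul_w, ainv, one_w]

lemma ainv_mul (x : AffW d) : ainv x * x = 1 := by
  ext i
  · simp [mul_t, ainv, one_t]
  · simp [mul_w, ainv, one_w]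

lemma affw_mul_assoc (a b c : AffW d) : a * b * c = a * (b * c) := by
  ext i
  · show (a * b).t i + c.t ((a.w * b.w)⁻¹ i) = a.t i + (b * c).t (a.w⁻¹ i)
    show a.t i + b.t (a.w⁻¹ i) + c.t ((a.w * b.w)⁻¹ i)
        = a.t i + (b.t (a.w⁻¹ i) + c.t (b.w⁻¹ (a.w⁻¹ i)))
    rw [mul_inv_rev, Equiv.Perm.mul_apply]
    ring
  · simp [mul_w, mul_assoc]

lemma act_one (v : Fin d → ℚ) : act (1 : AffW d) v = v := by
  funext i; simp [act, one_t, one_w]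

lemma act_mul (x y : AffW d) (v : Fin d → ℚ) : act (x * y) v = act x (act y v) := by
  funext i
  show ((x*y).t i : ℚ) + v ((x.w * y.w)⁻¹ i) = (x.t i : ℚ) + ((y.t (x.w⁻¹ i) : ℚ) + v (y.w⁻¹ (x.w⁻¹ i)))
  rw [mul_inv_rev, Equiv.Perm.mul_apply]
  show ((x.t i + y.t (x.w⁻¹ i) : ℤ) : ℚ) + _ = _
  push_cast
  ring

/-! ### Hyperplanes, separation -/

/-- Separation of two points by the hyperplane `v_i - v_j = k` (as a triple). -/
def sepAt (p q : Fin d → ℚ) (h : Fin d × Fin d × ℤ) : Prop :=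
  (p h.1 - p h.2.1 - (h.2.2 : ℚ)) * (q h.1 - q h.2.1 - (h.2.2 : ℚ)) < 0

lemma sepAt_def (p q : Fin d → ℚ) (i j : Fin d) (k : ℤ) :
    sepAt p q (i, j, k) ↔ (p i - p j - (k : ℚ)) * (q i - q j - (k : ℚ)) < 0 := Iff.rfl

lemma separates_iff (x : AffW d) (i j : Fin d) (k : ℤ) :
    Separates x i j k ↔ sepAt (base d) (act x (base d)) (i, j, k) := Iff.rfl

lemma sepAt_comm (p q : Fin d → ℚ) (h : Fin d × Fin d × ℤ) :
    sepAt p q h ↔ sepAt q p h := by unfold sepAt; rw [mul_comm]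

lemma sepAt_flip (p q : Fin d → ℚ) (i j : Fin d) (k : ℤ) :
    sepAt p q (j, i, -k) ↔ sepAt p q (i, j, k) := by
  rw [sepAt_def, sepAt_def]
  push_cast
  constructor <;> intro hyp <;> nlinarith [hyp]

/-- Transform of the hyperplane `v_i - v_j = k` under the affine map `z`. -/
def htr (z : AffW d) (h : Fin d × Fin d × ℤ) : Fin d × Fin d × ℤ :=
  (z.w h.1, z.w h.2.1, h.2.2 + z.t (z.w h.1) - z.t (z.w h.2.1))

lemma htr_one (h : Fin d × Fin d × ℤ) : htr (1 : AffW d) h = h := by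
  obtain ⟨i, j, k⟩ := h
  simp [htr, one_t, one_w]

lemma htr_mul (x y : AffW d) (h : Fin d × Fin d × ℤ) :
    htr (x * y) h = htr x (htr y h) := by
  obtain ⟨i, j, k⟩ := h
  have hw : ∀ a, (x * y).w a = x.w (y.w a) := fun a => rfl
  have ht : ∀ a, (x * y).t (x.w (y.w a)) = x.t (x.w (y.w a)) + y.t (y.w a) := by
    intro a
    show x.t _ + y.t (x.w⁻¹ _) = _
    rw [Equiv.Perm.coe_inv, Equiv.symm_apply_apply]
  simp only [htr, hw, ht]
  simp only [Prod.mk.injEq]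
  exact ⟨trivial, trivial, by ring⟩

lemma sepAt_htr (z : AffW d) (u v : Fin d → ℚ) (h : Fin d × Fin d × ℤ) :
    sepAt (act z u) (act z v) (htr z h) ↔ sepAt u v h := by
  obtain ⟨i, j, k⟩ := h
  have key : ∀ w : Fin d → ℚ,
      act z w (z.w i) - act z w (z.w j) - ((k + z.t (z.w i) - z.t (z.w j) : ℤ) : ℚ)
        = w i - w j - k := by
    intro w
    show (z.t (z.w i) : ℚ) + w (z.w⁻¹ (z.w i)) - ((z.t (z.w j) : ℚ) + w (z.w⁻¹ (z.w j))) - _ = _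
    rw [Equiv.Perm.coe_inv, Equiv.symm_apply_apply, Equiv.symm_apply_apply]
    push_cast
    ring
  show sepAt _ _ (z.w i, z.w j, k + z.t (z.w i) - z.t (z.w j)) ↔ _
  rw [sepAt_def, sepAt_def, key u, key v]

lemma htr_injective (z : AffW d) : Function.Injective (htr z) := by
  intro a b hab
  have := congrArg (htr (ainv z)) hab
  rwa [← htr_mul, ← htr_mul, ainv_mul, htr_one, htr_one] at this

end AffW
namespace AffW

variable {d : ℕ}

/-! ### Facts about the base point -/

lemma base_sub (a b : Fin d) :
    base d a - base d b = (((a : ℕ) : ℚ) - ((b : ℕ) : ℚ)) / d := by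
  have hd : (d : ℚ) ≠ 0 := by
    have : 0 < d := a.pos
    exact_mod_cast this.ne'
  unfold base
  field_simp
  ring

lemma base_cast_lt {a b : Fin d} (h : a < b) : ((a : ℕ) : ℚ) < ((b : ℕ) : ℚ) := by
  exact_mod_cast (Fin.lt_iff_val_lt_val.1 h)

lemma base_lt_base {a b : Fin d} : base d a < base d b ↔ a < b := by
  have hd : (0 : ℚ) < d := by exact_mod_cast a.pos
  rw [← sub_pos, base_sub b a, div_pos_iff]
  constructor
  · rintro (⟨h1, _⟩ | ⟨_, h2⟩)
    · have : ((a:ℕ):ℚ) < ((b:ℕ):ℚ) := by linarith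
      have : (a:ℕ) < (b:ℕ) := by exact_mod_cast this
      exact Fin.lt_iff_val_lt_val.2 this
    · linarith
  · intro h
    exact Or.inl ⟨by have := base_cast_lt h; linarith, hd⟩

lemma base_sub_lt_one (a b : Fin d) : base d a - base d b < 1 := by
  have hd : (0 : ℚ) < d := by exact_mod_cast a.pos
  rw [base_sub, div_lt_one hd]
  have ha : ((a:ℕ):ℚ) < d := by exact_mod_cast a.is_lt
  have hb : (0:ℚ) ≤ ((b:ℕ):ℚ) := by positivity
  linarith

lemma neg_one_lt_base_sub (a b : Fin d) : -1 < base d a - base d b := by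
  have := base_sub_lt_one b a
  linarith

lemma base_sub_ne {a b : Fin d} (hab : a ≠ b) : base d a - base d b ≠ 0 := by
  rcases lt_or_gt_of_ne hab with h | h
  · have := base_lt_base.2 h; linarith
  · have := base_lt_base.2 h; linarith

/-- Integer plus a small nonzero difference of base coordinates is nonzero. -/
lemma int_add_base_sub_ne (n : ℤ) {a b : Fin d} (hab : a ≠ b) :
    (n : ℚ) + (base d a - base d b) ≠ 0 := by
  have h1 := base_sub_lt_one a b
  have h2 := neg_one_lt_base_sub a b
  have h3 := base_sub_ne hab
  intro h0
  have hn1 : (n : ℚ) < 1 := by linarith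
  have hn2 : (-1 : ℚ) < n := by linarith
  have : n = 0 := by
    have l1 : n < 1 := by exact_mod_cast hn1
    have l2 : -1 < n := by exact_mod_cast hn2
    omega
  rw [this] at h0
  simp at h0
  exact h3 (by linarith)

/-- Nonvanishing: images of the base point are never on an affine root hyperplane. -/
lemma act_sub_ne (z : AffW d) {i j : Fin d} (hij : i ≠ j) (k : ℤ) :
    act z (base d) i - act z (base d) j - (k : ℚ) ≠ 0 := by
  have hab : z.w⁻¹ i ≠ z.w⁻¹ j := fun h => hij (z.w⁻¹.injective h)
  have key : act z (base d) i - act z (base d) j - (k : ℚ)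
      = ((z.t i - z.t j - k : ℤ) : ℚ) + (base d (z.w⁻¹ i) - base d (z.w⁻¹ j)) := by
    show (z.t i : ℚ) + base d (z.w⁻¹ i) - ((z.t j : ℚ) + base d (z.w⁻¹ j)) - (k:ℚ) = _
    push_cast
    ring
  rw [key]
  exact int_add_base_sub_ne _ hab

lemma base_sub_sub_ne {i j : Fin d} (hij : i ≠ j) (k : ℤ) :
    base d i - base d j - (k : ℚ) ≠ 0 := by
  have := act_sub_ne (1 : AffW d) hij k
  rwa [act_one] at this

/-! ### Sign lemmas -/

lemma sep3 {u v w : ℚ} (h1 : u * v < 0) (h2 : ¬ v * w < 0) (hw : w ≠ 0) : u * w < 0 := by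
  rcases lt_trichotomy v 0 with hv | hv | hv
  · have hu : 0 < u := by nlinarith
    have hw' : w < 0 := by
      rcases lt_trichotomy w 0 with h | h | h
      · exact h
      · exact absurd h hw
      · exact absurd (mul_neg_of_neg_of_pos hv h) h2
    exact mul_neg_of_pos_of_neg hu hw'
  · rw [hv] at h1; simp at h1
  · have hu : u < 0 := by nlinarith
    have hw' : 0 < w := by
      rcases lt_trichotomy w 0 with h | h | h
      · exact absurd (mul_neg_of_pos_of_neg hv h) h2
      · exact absurd h hw
      · exact h
    exact mul_neg_of_neg_of_pos hu hw'

lemma sep3' {u v w : ℚ} (h1 : ¬ u * v < 0) (h2 : v * w < 0) (hu : u ≠ 0) : u * w < 0 := by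
  have := sep3 (u := w) (v := v) (w := u) (by linarith [h2, mul_comm v w]; ) (by
    rw [mul_comm]; exact h1) hu
  linarith [this, mul_comm w u]

lemma quadlem {Aq AB m : ℚ} (h0 : 0 < Aq * AB) (hm : 0 < (AB - m) * (AB + m))
    (hs : (Aq - m) * (AB - m) < 0) : 0 ≤ (Aq + m) * (AB + m) := by
  rcases lt_trichotomy AB 0 with hAB | hAB | hAB
  · have hAq : Aq < 0 := by nlinarith
    have h1 : AB - m < 0 ∧ AB + m < 0 := by constructor <;> nlinarith
    have h2 : 0 < Aq - m := by nlinarith [h1.1]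
    have h3 : Aq + m < 0 := by nlinarith [h1.1, h1.2]
    nlinarith [h3, h1.2]
  · rw [hAB] at hm
    exfalso
    nlinarith [hm, sq_nonneg m]
  · have hAq : 0 < Aq := by nlinarith
    have h1 : 0 < AB - m ∧ 0 < AB + m := by constructor <;> nlinarith
    have h2 : Aq - m < 0 := by nlinarith [h1.1]
    have h3 : 0 < Aq + m := by nlinarith [h1.1, h1.2]
    nlinarith [h3, h1.2]

lemma signlem {a aq bb bq g gq : ℚ} (hg : g = bb + a) (hgq : gq = bq + aq)
    (h0 : ¬ aq * a < 0) (_ha : a ≠ 0) (_haq : aq ≠ 0)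
    (hmem : bb * g < 0) (hsrc : bq * bb < 0) : ¬ gq * g < 0 := by
  intro hcon
  rcases lt_trichotomy bb 0 with hb | hb | hb
  · have hgpos : 0 < g := by nlinarith
    have hapos : 0 < a := by nlinarith
    have hbq : 0 < bq := by nlinarith
    have hgq' : gq < 0 := by nlinarith
    have haq' : aq < 0 := by nlinarith
    exact h0 (mul_neg_of_neg_of_pos haq' hapos)
  · rw [hb] at hmem; simp at hmem
  · have hgneg : g < 0 := by nlinarith
    have haneg : a < 0 := by nlinarith
    have hbq : bq < 0 := by nlinarith
    have hgq' : 0 < gq := by nlinarith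
    have haq' : 0 < aq := by nlinarith
    exact h0 (mul_neg_of_pos_of_neg haq' haneg)

end AffW
namespace AffW

variable {d : ℕ}

/-- The affine reflection in the hyperplane `v_i - v_j = k`. -/
def reflOf (i j : Fin d) (k : ℤ) : AffW d :=
  ⟨k • (Pi.single i 1 - Pi.single j 1), Equiv.swap i j⟩

lemma reflOf_w (i j : Fin d) (k : ℤ) : (reflOf i j k).w = Equiv.swap i j := rfl

lemma reflOf_t {i j : Fin d} (hne : i ≠ j) (k : ℤ) (a : Fin d) :
    (reflOf i j k).t a = if a = i then k else if a = j then -k else 0 := by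
  show k • ((Pi.single i 1 - Pi.single j 1 : Fin d → ℤ) a) = _
  rw [Pi.sub_apply, Pi.single_apply, Pi.single_apply]
  by_cases h1 : a = i
  · subst h1
    rw [if_pos rfl, if_pos rfl, if_neg hne]
    simp
  · rw [if_neg h1, if_neg h1]
    by_cases h2 : a = j
    · subst h2; rw [if_pos rfl, if_pos rfl]; simp
    · rw [if_neg h2, if_neg h2]; simp

lemma reflOf_t_left {i j : Fin d} (hne : i ≠ j) (k : ℤ) : (reflOf i j k).t i = k := by
  rw [reflOf_t hne, if_pos rfl]

lemma reflOf_t_right {i j : Fin d} (hne : i ≠ j) (k : ℤ) : (reflOf i j k).t j = -k := by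
  rw [reflOf_t hne, if_neg (Ne.symm hne), if_pos rfl]

lemma reflOf_t_other {i j a : Fin d} (hne : i ≠ j) (k : ℤ) (h1 : a ≠ i) (h2 : a ≠ j) :
    (reflOf i j k).t a = 0 := by
  rw [reflOf_t hne, if_neg h1, if_neg h2]

lemma reflOf_mul_self {i j : Fin d} (hne : i ≠ j) (k : ℤ) :
    reflOf i j k * reflOf i j k = 1 := by
  ext a
  · show (reflOf i j k).t a + (reflOf i j k).t ((Equiv.swap i j)⁻¹ a) = 0
    rw [Equiv.swap_inv]
    rw [reflOf_t hne, reflOf_t hne]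
    by_cases h1 : a = i
    · subst h1
      rw [if_pos rfl, Equiv.swap_apply_left, if_neg (Ne.symm hne), if_pos rfl]; ring
    · by_cases h2 : a = j
      · subst h2
        rw [if_neg h1, if_pos rfl, Equiv.swap_apply_right, if_pos rfl]; ring
      · rw [if_neg h1, if_neg h2, Equiv.swap_apply_of_ne_of_ne h1 h2,
          if_neg h1, if_neg h2]; ring
  · simp [mul_w, reflOf_w, one_w]

lemma reflOf_act_left {i j : Fin d} (hne : i ≠ j) (k : ℤ) :
    act (reflOf i j k) (base d) i = (k : ℚ) + base d j := by
  show ((reflOf i j k).t i : ℚ) + base d ((Equiv.swap i j)⁻¹ i) = _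
  rw [Equiv.swap_inv, Equiv.swap_apply_left, reflOf_t_left hne]

lemma reflOf_act_right {i j : Fin d} (hne : i ≠ j) (k : ℤ) :
    act (reflOf i j k) (base d) j = -(k : ℚ) + base d i := by
  show ((reflOf i j k).t j : ℚ) + base d ((Equiv.swap i j)⁻¹ j) = _
  rw [Equiv.swap_inv, Equiv.swap_apply_right, reflOf_t_right hne]
  push_cast
  ring_nf

lemma reflOf_act_other {i j a : Fin d} (hne : i ≠ j) (k : ℤ) (h1 : a ≠ i) (h2 : a ≠ j) :
    act (reflOf i j k) (base d) a = base d a := by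
  show ((reflOf i j k).t a : ℚ) + base d ((Equiv.swap i j)⁻¹ a) = _
  rw [Equiv.swap_inv, Equiv.swap_apply_of_ne_of_ne h1 h2, reflOf_t_other hne k h1 h2]
  simp

/-- The key sign computation ("pair claim"). -/
lemma pairclaim {i₀ j₀ : Fin d} {k₀ : ℤ} (hne : i₀ ≠ j₀) (q : Fin d → ℚ)
    (hq : ∀ (a b : Fin d), a ≠ b → ∀ k : ℤ, q a - q b - (k : ℚ) ≠ 0)
    (hsep : ¬ sepAt q (base d) (i₀, j₀, k₀))
    {h : Fin d × Fin d × ℤ} (hh : h.1 ≠ h.2.1)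
    (hmem : sepAt (base d) (act (reflOf i₀ j₀ k₀) (base d)) h)
    (hsrc : sepAt q (base d) h) :
    ¬ sepAt q (base d) (htr (reflOf i₀ j₀ k₀) h) := by
  obtain ⟨i, j, k⟩ := h
  replace hh : i ≠ j := hh
  have hAq : q i₀ - q j₀ - (k₀ : ℚ) ≠ 0 := hq _ _ hne _
  have hAB : base d i₀ - base d j₀ - (k₀ : ℚ) ≠ 0 := base_sub_sub_ne hne _
  have h0 : 0 < (q i₀ - q j₀ - (k₀ : ℚ)) * (base d i₀ - base d j₀ - (k₀ : ℚ)) := by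
    rw [sepAt_def] at hsep
    push_neg at hsep
    exact lt_of_le_of_ne hsep (Ne.symm (mul_ne_zero hAq hAB))
  rw [sepAt_def] at hmem hsrc
  by_cases hi1 : i = i₀
  · subst hi1
    by_cases hj2 : j = j₀
    · -- case (i₀, j₀)
      subst hj2
      have hgoal : htr (reflOf i j k₀) (i, j, k) = (j, i, k + -k₀ - k₀) := by
        show ((Equiv.swap i j) i, (Equiv.swap i j) j,
          k + (reflOf i j k₀).t ((Equiv.swap i j) i) - (reflOf i j k₀).t ((Equiv.swap i j) j)) = _
        rw [Equiv.swap_apply_left, Equiv.swap_apply_right,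
          reflOf_t_right hh, reflOf_t_left hh]
      rw [hgoal, sepAt_def]
      rw [reflOf_act_left hh, reflOf_act_right hh] at hmem
      intro hcon
      have key := quadlem (Aq := q i - q j - (k₀:ℚ)) (AB := base d i - base d j - (k₀:ℚ))
        (m := (k:ℚ) - k₀) h0 (by push_cast at hmem ⊢; nlinarith [hmem])
        (by push_cast at hsrc ⊢; linarith [hsrc])
      push_cast at hcon
      nlinarith [key, hcon]
    · -- case A : i = i₀, j ∉ {i₀, j₀}
      have hji : j ≠ i := Ne.symm hh
      have hgoal : htr (reflOf i j₀ k₀) (i, j, k) = (j₀, j, k + -k₀ - 0) := by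
        show ((Equiv.swap i j₀) i, (Equiv.swap i j₀) j,
          k + (reflOf i j₀ k₀).t ((Equiv.swap i j₀) i)
            - (reflOf i j₀ k₀).t ((Equiv.swap i j₀) j)) = _
        rw [Equiv.swap_apply_left, Equiv.swap_apply_of_ne_of_ne hji hj2,
          reflOf_t_right hne, reflOf_t_other hne _ hji hj2]
      rw [hgoal, sepAt_def]
      rw [reflOf_act_left hne, reflOf_act_other hne _ hji hj2] at hmem
      exact signlem (a := -(base d i - base d j₀ - (k₀:ℚ)))
        (aq := -(q i - q j₀ - (k₀:ℚ)))
        (bb := base d i - base d j - (k:ℚ)) (bq := q i - q j - (k:ℚ))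
        (g := base d j₀ - base d j - ((k + -k₀ - 0 : ℤ):ℚ))
        (gq := q j₀ - q j - ((k + -k₀ - 0 : ℤ):ℚ))
        (by push_cast; ring) (by push_cast; ring)
        (by intro hcon; nlinarith [h0, hcon])
        (by intro hcon; exact hAB (by linarith))
        (by intro hcon; exact hAq (by linarith))
        (by push_cast at hmem ⊢; linarith [hmem]) hsrc
  · by_cases hi2 : i = j₀
    · subst hi2
      by_cases hj1 : j = i₀
      · -- case B : (j₀, i₀)
        subst hj1
        have hgoal : htr (reflOf j i k₀) (i, j, k) = (j, i, k + k₀ - -k₀) := by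
          show ((Equiv.swap j i) i, (Equiv.swap j i) j,
            k + (reflOf j i k₀).t ((Equiv.swap j i) i)
              - (reflOf j i k₀).t ((Equiv.swap j i) j)) = _
          rw [Equiv.swap_apply_right, Equiv.swap_apply_left,
            reflOf_t_left hne, reflOf_t_right hne]
        rw [hgoal, sepAt_def]
        rw [reflOf_act_left hne, reflOf_act_right hne] at hmem
        intro hcon
        have key := quadlem (Aq := q j - q i - (k₀:ℚ)) (AB := base d j - base d i - (k₀:ℚ))
          (m := -((k:ℚ) + k₀)) h0 (by push_cast at hmem ⊢; nlinarith [hmem])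
          (by push_cast at hsrc ⊢; nlinarith [hsrc])
        push_cast at hcon
        nlinarith [key, hcon]
      · -- case C : i = j₀, j ∉ {i₀, j₀}
        have hjj : j ≠ i := Ne.symm hh
        have hgoal : htr (reflOf i₀ i k₀) (i, j, k) = (i₀, j, k + k₀ - 0) := by
          show ((Equiv.swap i₀ i) i, (Equiv.swap i₀ i) j,
            k + (reflOf i₀ i k₀).t ((Equiv.swap i₀ i) i)
              - (reflOf i₀ i k₀).t ((Equiv.swap i₀ i) j)) = _
          rw [Equiv.swap_apply_right, Equiv.swap_apply_of_ne_of_ne hj1 hjj,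
            reflOf_t_left hne, reflOf_t_other hne _ hj1 hjj]
        rw [hgoal, sepAt_def]
        rw [reflOf_act_right hne, reflOf_act_other hne _ hj1 hjj] at hmem
        exact signlem (a := base d i₀ - base d i - (k₀:ℚ)) (aq := q i₀ - q i - (k₀:ℚ))
          (bb := base d i - base d j - (k:ℚ)) (bq := q i - q j - (k:ℚ))
          (g := base d i₀ - base d j - ((k + k₀ - 0 : ℤ):ℚ))
          (gq := q i₀ - q j - ((k + k₀ - 0 : ℤ):ℚ))
          (by push_cast; ring) (by push_cast; ring)
          (by intro hcon; nlinarith [h0, hcon]) hAB hAq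
          (by push_cast at hmem ⊢; linarith [hmem]) hsrc
    · -- i ∉ {i₀, j₀}
      by_cases hj1 : j = i₀
      · -- case D : j = i₀
        subst hj1
        have hgoal : htr (reflOf j j₀ k₀) (i, j, k) = (i, j₀, k + 0 - -k₀) := by
          show ((Equiv.swap j j₀) i, (Equiv.swap j j₀) j,
            k + (reflOf j j₀ k₀).t ((Equiv.swap j j₀) i)
              - (reflOf j j₀ k₀).t ((Equiv.swap j j₀) j)) = _
          rw [Equiv.swap_apply_left, Equiv.swap_apply_of_ne_of_ne hi1 hi2,
            reflOf_t_other hne _ hi1 hi2, reflOf_t_right hne]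
        rw [hgoal, sepAt_def]
        rw [reflOf_act_left hne, reflOf_act_other hne _ hi1 hi2] at hmem
        exact signlem (a := base d j - base d j₀ - (k₀:ℚ)) (aq := q j - q j₀ - (k₀:ℚ))
          (bb := base d i - base d j - (k:ℚ)) (bq := q i - q j - (k:ℚ))
          (g := base d i - base d j₀ - ((k + 0 - -k₀ : ℤ):ℚ))
          (gq := q i - q j₀ - ((k + 0 - -k₀ : ℤ):ℚ))
          (by push_cast; ring) (by push_cast; ring)
          (by intro hcon; nlinarith [h0, hcon]) hAB hAq
          (by push_cast at hmem ⊢; linarith [hmem]) hsrc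
      · by_cases hj2 : j = j₀
        · -- case E : j = j₀
          subst hj2
          have hgoal : htr (reflOf i₀ j k₀) (i, j, k) = (i, i₀, k + 0 - k₀) := by
            show ((Equiv.swap i₀ j) i, (Equiv.swap i₀ j) j,
              k + (reflOf i₀ j k₀).t ((Equiv.swap i₀ j) i)
                - (reflOf i₀ j k₀).t ((Equiv.swap i₀ j) j)) = _
            rw [Equiv.swap_apply_right, Equiv.swap_apply_of_ne_of_ne hi1 hi2,
              reflOf_t_other hne _ hi1 hi2, reflOf_t_left hne]
          rw [hgoal, sepAt_def]
          rw [reflOf_act_right hne, reflOf_act_other hne _ hi1 hi2] at hmem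
          exact signlem (a := -(base d i₀ - base d j - (k₀:ℚ)))
            (aq := -(q i₀ - q j - (k₀:ℚ)))
            (bb := base d i - base d j - (k:ℚ)) (bq := q i - q j - (k:ℚ))
            (g := base d i - base d i₀ - ((k + 0 - k₀ : ℤ):ℚ))
            (gq := q i - q i₀ - ((k + 0 - k₀ : ℤ):ℚ))
            (by push_cast; ring) (by push_cast; ring)
            (by intro hcon; nlinarith [h0, hcon])
            (by intro hcon; exact hAB (by linarith))
            (by intro hcon; exact hAq (by linarith))
            (by push_cast at hmem ⊢; linarith [hmem]) hsrc
        · -- disjoint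
          exfalso
          rw [reflOf_act_other hne _ hi1 hi2, reflOf_act_other hne _ hj1 hj2] at hmem
          nlinarith [hmem]

end AffW
namespace AffW

variable {d : ℕ}

/-- The set of separating hyperplanes counted by `lenR` (with `i < j`). -/
def SepT (R : Fin d → Fin d → Prop) (x : AffW d) : Set (Fin d × Fin d × ℤ) :=
  {p | p.1 < p.2.1 ∧ R p.1 p.2.1 ∧ Separates x p.1 p.2.1 p.2.2}

/-- The doubled (orientation-free) set of separating hyperplanes. -/
def SepT2 (R : Fin d → Fin d → Prop) (x : AffW d) : Set (Fin d × Fin d × ℤ) :=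
  {p | p.1 ≠ p.2.1 ∧ R p.1 p.2.1 ∧ Separates x p.1 p.2.1 p.2.2}

lemma lenR_eq_ncard (R : Fin d → Fin d → Prop) (x : AffW d) :
    lenR R x = (SepT R x).ncard := rfl

lemma separates_iff' (x : AffW d) (p : Fin d × Fin d × ℤ) :
    Separates x p.1 p.2.1 p.2.2 ↔ sepAt (base d) (act x (base d)) p := Iff.rfl

lemma sepAt_mid {p q r : Fin d → ℚ} {h : Fin d × Fin d × ℤ}
    (h1 : sepAt p q h) (h2 : ¬ sepAt q r h) (h3 : r h.1 - r h.2.1 - (h.2.2 : ℚ) ≠ 0) :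
    sepAt p r h := sep3 h1 h2 h3

lemma sepAt_mid' {p q r : Fin d → ℚ} {h : Fin d × Fin d × ℤ}
    (h1 : ¬ sepAt p q h) (h2 : sepAt q r h) (h3 : p h.1 - p h.2.1 - (h.2.2 : ℚ) ≠ 0) :
    sepAt p r h := sep3' h1 h2 h3

lemma separates_k_bound {x : AffW d} {i j : Fin d} {k : ℤ}
    (h : Separates x i j k) : |k| ≤ |x.t i| + |x.t j| + 1 := by
  unfold Separates at h
  have e1 : act x (base d) i - act x (base d) j
      = ((x.t i - x.t j : ℤ) : ℚ) + (base d (x.w⁻¹ i) - base d (x.w⁻¹ j)) := by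
    show (x.t i : ℚ) + base d (x.w⁻¹ i) - ((x.t j : ℚ) + base d (x.w⁻¹ j)) = _
    push_cast; ring
  by_contra hk
  push_neg at hk
  have hb1 := base_sub_lt_one i j
  have hb2 := neg_one_lt_base_sub i j
  have hb3 := base_sub_lt_one (x.w⁻¹ i) (x.w⁻¹ j)
  have hb4 := neg_one_lt_base_sub (x.w⁻¹ i) (x.w⁻¹ j)
  have hti : (x.t i : ℚ) ≤ |(x.t i : ℚ)| := le_abs_self _
  have hti' : -|(x.t i : ℚ)| ≤ (x.t i : ℚ) := neg_abs_le _
  have htj : (x.t j : ℚ) ≤ |(x.t j : ℚ)| := le_abs_self _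
  have htj' : -|(x.t j : ℚ)| ≤ (x.t j : ℚ) := neg_abs_le _
  rw [e1] at h
  rcases lt_abs.1 hk with hk1 | hk1
  · have hkq : ((|x.t i| + |x.t j| + 1 : ℤ) : ℚ) < (k : ℚ) := by exact_mod_cast hk1
    push_cast at hkq
    have hu : base d i - base d j - (k : ℚ) < 0 := by
      have : (0:ℚ) ≤ |(x.t i : ℚ)| := abs_nonneg _
      have : (0:ℚ) ≤ |(x.t j : ℚ)| := abs_nonneg _
      linarith
    have hv : ((x.t i - x.t j : ℤ) : ℚ) + (base d (x.w⁻¹ i) - base d (x.w⁻¹ j)) - (k:ℚ) < 0 := by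
      push_cast
      linarith
    nlinarith [h, mul_pos_of_neg_of_neg hu hv]
  · have hkq : ((|x.t i| + |x.t j| + 1 : ℤ) : ℚ) < (-k : ℚ) := by exact_mod_cast hk1
    push_cast at hkq
    have hu : 0 < base d i - base d j - (k : ℚ) := by
      have : (0:ℚ) ≤ |(x.t i : ℚ)| := abs_nonneg _
      have : (0:ℚ) ≤ |(x.t j : ℚ)| := abs_nonneg _
      linarith
    have hv : 0 < ((x.t i - x.t j : ℤ) : ℚ) + (base d (x.w⁻¹ i) - base d (x.w⁻¹ j)) - (k:ℚ) := by
      push_cast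
      linarith
    nlinarith [h, mul_pos hu hv]

lemma sepT2_finite (R : Fin d → Fin d → Prop) (x : AffW d) : (SepT2 R x).Finite := by
  classical
  set K : ℤ := 2 * (Finset.univ.sup fun i : Fin d => (x.t i).natAbs) + 1 with hKdef
  have hbound : ∀ i, |x.t i| ≤ (Finset.univ.sup fun i : Fin d => (x.t i).natAbs : ℕ) := by
    intro i
    rw [Int.abs_eq_natAbs]
    have := Finset.le_sup (f := fun i : Fin d => (x.t i).natAbs) (Finset.mem_univ i)
    exact_mod_cast this
  apply Set.Finite.subset
    ((Set.finite_univ (α := Fin d)).prod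
      ((Set.finite_univ (α := Fin d)).prod (Set.finite_Icc (-K) K)))
  rintro ⟨i, j, k⟩ ⟨hne, hR, hsep⟩
  dsimp only at hne hR hsep
  refine ⟨Set.mem_univ _, Set.mem_univ _, ?_⟩
  have := separates_k_bound hsep
  have h1 := hbound i
  have h2 := hbound j
  simp only [Set.mem_Icc]
  constructor
  · have : -K ≤ -(|x.t i| + |x.t j| + 1) := by omega
    have h3 : -(|x.t i| + |x.t j| + 1) ≤ k := by
      have := neg_abs_le k
      omega
    omega
  · have h3 : k ≤ |x.t i| + |x.t j| + 1 := le_trans (le_abs_self k) ‹|k| ≤ _›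
    omega

lemma sepT_finite (R : Fin d → Fin d → Prop) (x : AffW d) : (SepT R x).Finite :=
  (sepT2_finite R x).subset (fun p hp => ⟨ne_of_lt hp.1, hp.2⟩)

/-- Doubling: the orientation-free count is twice the normalized count. -/
lemma sepT2_ncard (R : Fin d → Fin d → Prop) (hsym : ∀ {a b}, R a b → R b a) (x : AffW d) :
    (SepT2 R x).ncard = 2 * (SepT R x).ncard := by
  classical
  set fl : Fin d × Fin d × ℤ → Fin d × Fin d × ℤ := fun p => (p.2.1, p.1, -p.2.2) with hfl
  have hflinj : Function.Injective fl := by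
    rintro ⟨a, b, c⟩ ⟨a', b', c'⟩ h
    simp only [hfl, Prod.mk.injEq] at h
    obtain ⟨h1, h2, h3⟩ := h
    subst h1; subst h2
    simp only [neg_inj] at h3
    subst h3
    rfl
  have hsepflip : ∀ (i j : Fin d) (k : ℤ), Separates x j i (-k) ↔ Separates x i j k := by
    intro i j k
    rw [separates_iff, separates_iff]
    exact sepAt_flip _ _ i j k
  have hunion : SepT2 R x = SepT R x ∪ fl '' (SepT R x) := by
    ext ⟨i, j, k⟩
    constructor
    · rintro ⟨hne, hR, hsep⟩
      dsimp only at hne hR hsep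
      rcases lt_or_gt_of_ne hne with hlt | hgt
      · exact Or.inl ⟨hlt, hR, hsep⟩
      · refine Or.inr ⟨(j, i, -k), ⟨hgt, hsym hR, (hsepflip i j k).mpr hsep⟩, by simp [hfl]⟩
    · rintro (⟨hlt, hR, hsep⟩ | ⟨⟨a, b, c⟩, ⟨hlt, hR, hsep⟩, heq⟩)
      · exact ⟨ne_of_lt hlt, hR, hsep⟩
      · dsimp only at hlt hR hsep
        simp only [hfl, Prod.mk.injEq] at heq
        obtain ⟨h1, h2, h3⟩ := heq
        subst h1; subst h2; subst h3
        exact ⟨ne_of_gt hlt, hsym hR, (hsepflip a b c).mpr hsep⟩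
  have hdisj : Disjoint (SepT R x) (fl '' (SepT R x)) := by
    rw [Set.disjoint_left]
    rintro ⟨i, j, k⟩ ⟨hlt, _, _⟩ ⟨⟨a, b, c⟩, ⟨hlt', _, _⟩, heq⟩
    simp only [hfl, Prod.mk.injEq] at heq
    obtain ⟨h1, h2, _⟩ := heq
    subst h1; subst h2
    exact absurd hlt (asymm hlt')
  rw [hunion, Set.ncard_union_eq hdisj (sepT_finite R x)
    ((sepT_finite R x).image fl), Set.ncard_image_of_injective _ hflinj]
  ring

end AffW
namespace AffW

variable {d : ℕ}

/-- Crossing lemma: if the reflecting hyperplane does not separate `y⁻¹·b` from `b`,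
then right multiplication by the reflection does not decrease the length. -/
lemma crossing {R : Fin d → Fin d → Prop}
    (hsym : ∀ {a b : Fin d}, R a b → R b a)
    (htrans : ∀ {a b c : Fin d}, R a b → R b c → R a c) (hrefl : ∀ a, R a a)
    (y : AffW d) (hw : ∀ i, R (y.w i) i)
    {i₀ j₀ : Fin d} {k₀ : ℤ} (hne : i₀ ≠ j₀) (hR0 : R i₀ j₀)
    (hsep : ¬ sepAt (act (ainv y) (base d)) (base d) (i₀, j₀, k₀)) :
    lenR R y ≤ lenR R (y * reflOf i₀ j₀ k₀) := by
  classical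
  set r : AffW d := reflOf i₀ j₀ k₀ with hrdef
  set B : Fin d → ℚ := base d with hBdef
  set q : Fin d → ℚ := act (ainv y) (base d) with hqdef
  have hq : ∀ (a b : Fin d), a ≠ b → ∀ k : ℤ, q a - q b - (k : ℚ) ≠ 0 :=
    fun a b hab k => act_sub_ne (ainv y) hab k
  have hyq : act y q = B := by
    rw [hqdef, ← act_mul, mul_ainv, act_one]
  have hrr : act r (act r B) = B := by
    rw [← act_mul, hrdef, reflOf_mul_self hne, act_one]
  -- preservation of the relation R by the various permutations
  have pres : ∀ (g : Fin d → Fin d), (∀ a, R (g a) a) →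
      ∀ {a b : Fin d}, R a b → R (g a) (g b) :=
    fun g hg a b hab => htrans (hg a) (htrans hab (hsym (hg b)))
  have hwinv : ∀ a, R (y.w⁻¹ a) a := by
    intro a
    have := hw (y.w⁻¹ a)
    rw [Equiv.Perm.coe_inv, Equiv.apply_symm_apply] at this
    exact hsym this
  have hswap : ∀ a, R (Equiv.swap i₀ j₀ a) a := by
    intro a
    by_cases h1 : a = i₀
    · subst h1; rw [Equiv.swap_apply_left]; exact hsym hR0
    by_cases h2 : a = j₀
    · subst h2; rw [Equiv.swap_apply_right]; exact hR0
    · rw [Equiv.swap_apply_of_ne_of_ne h1 h2]; exact hrefl a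
  -- the injection
  set s : AffW d := y * r * ainv y with hsdef
  set Φ : Fin d × Fin d × ℤ → Fin d × Fin d × ℤ :=
    fun p => if sepAt (act y B) (act (y * r) B) p then htr s p else p with hΦdef
  -- main facts about the positive branch
  have posfact : ∀ p : Fin d × Fin d × ℤ, p.1 ≠ p.2.1 → R p.1 p.2.1 →
      sepAt B (act y B) p → sepAt (act y B) (act (y * r) B) p →
      (htr s p).1 ≠ (htr s p).2.1 ∧ R (htr s p).1 (htr s p).2.1 ∧
      sepAt B (act (y * r) B) (htr s p) ∧ sepAt (act y B) (act (y * r) B) (htr s p) := by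
    intro p hp1 hp2 hp3 hp4
    set h'' : Fin d × Fin d × ℤ := htr (ainv y) p with hh''def
    have e_p : htr y h'' = p := by
      rw [hh''def, ← htr_mul, mul_ainv, htr_one]
    have e_s : htr s p = htr y (htr r h'') := by
      rw [hsdef, htr_mul, htr_mul, hh''def]
    have hij'' : h''.1 ≠ h''.2.1 := by
      rw [hh''def]
      exact fun hcon => hp1 ((ainv y).w.injective hcon)
    have hBP : sepAt B (act r B) h'' := by
      have hc := hp4
      rw [← e_p, act_mul] at hc
      rwa [sepAt_htr y B (act r B) h''] at hc
    have hqB : sepAt q B h'' := by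
      have hc := hp3
      nth_rewrite 1 [← hyq] at hc
      rw [← e_p] at hc
      rwa [sepAt_htr y q B h''] at hc
    have main : ¬ sepAt q B (htr r h'') := by
      rw [hrdef]
      exact pairclaim hne q hq hsep hij'' (by rw [← hrdef]; exact hBP) hqB
    -- components of the image
    have hcomp1 : (htr s p).1 = y.w ((htr r h'').1) := by rw [e_s]; rfl
    have hcomp2 : (htr s p).2.1 = y.w ((htr r h'').2.1) := by rw [e_s]; rfl
    have hrh1 : (htr r h'').1 = Equiv.swap i₀ j₀ h''.1 := rfl
    have hrh2 : (htr r h'').2.1 = Equiv.swap i₀ j₀ h''.2.1 := rfl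
    have himgne : (htr s p).1 ≠ (htr s p).2.1 := by
      rw [hcomp1, hcomp2, hrh1, hrh2]
      intro hcon
      exact hij'' ((Equiv.swap i₀ j₀).injective (y.w.injective hcon))
    have hR'' : R h''.1 h''.2.1 := by
      rw [hh''def]
      exact pres _ hwinv hp2
    have himgR : R (htr s p).1 (htr s p).2.1 := by
      rw [hcomp1, hcomp2, hrh1, hrh2]
      exact pres _ hw (pres _ hswap hR'')
    -- separation of the image
    have hmid : sepAt (act y B) (act (y * r) B) (htr s p) := by
      rw [e_s, act_mul, sepAt_htr y B (act r B) (htr r h'')]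
      have : sepAt (act r (act r B)) (act r B) (htr r h'') := by
        rw [sepAt_htr r (act r B) B h'', sepAt_comm]
        exact hBP
      rwa [hrr] at this
    have hnotB : ¬ sepAt B (act y B) (htr s p) := by
      nth_rewrite 1 [← hyq]
      rw [e_s, sepAt_htr y q B (htr r h'')]
      exact main
    refine ⟨himgne, himgR, ?_, hmid⟩
    exact sepAt_mid' hnotB hmid (by
      rw [hBdef]
      exact base_sub_sub_ne himgne _)
  -- conclude via an injection on the doubled sets
  have hmain2 : (SepT2 R y).ncard ≤ (SepT2 R (y * r)).ncard := by
    refine Set.ncard_le_ncard_of_injOn Φ ?_ ?_ (sepT2_finite R (y * r))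
    · rintro ⟨i, j, k⟩ ⟨hne', hR', hsep'⟩
      dsimp only at hne' hR' hsep'
      rw [separates_iff y i j k] at hsep'
      by_cases hc : sepAt (act y B) (act (y * r) B) (i, j, k)
      · have hf := posfact (i, j, k) hne' hR' hsep' hc
        have : Φ (i, j, k) = htr s (i, j, k) := if_pos hc
        rw [this]
        exact ⟨hf.1, hf.2.1, (separates_iff' _ _).mpr hf.2.2.1⟩
      · have : Φ (i, j, k) = (i, j, k) := if_neg hc
        rw [this]
        refine ⟨hne', hR', (separates_iff' _ _).mpr ?_⟩
        exact sepAt_mid hsep' hc (act_sub_ne (y * r) hne' _)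
    · rintro ⟨i, j, k⟩ ⟨hne1, hR1, hsep1⟩ ⟨i', j', k'⟩ ⟨hne2, hR2, hsep2⟩ heq
      dsimp only at hne1 hR1 hsep1 hne2 hR2 hsep2
      rw [separates_iff y i j k] at hsep1
      rw [separates_iff y i' j' k'] at hsep2
      by_cases hc1 : sepAt (act y B) (act (y * r) B) (i, j, k) <;>
        by_cases hc2 : sepAt (act y B) (act (y * r) B) (i', j', k')
      · rw [hΦdef] at heq
        simp only [if_pos hc1, if_pos hc2] at heq
        exact htr_injective s heq
      · rw [hΦdef] at heq
        simp only [if_pos hc1, if_neg hc2] at heq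
        exfalso
        have hf := posfact (i, j, k) hne1 hR1 hsep1 hc1
        rw [heq] at hf
        exact hc2 hf.2.2.2
      · rw [hΦdef] at heq
        simp only [if_neg hc1, if_pos hc2] at heq
        exfalso
        have hf := posfact (i', j', k') hne2 hR2 hsep2 hc2
        rw [← heq] at hf
        exact hc1 hf.2.2.2
      · rw [hΦdef] at heq
        simp only [if_neg hc1, if_neg hc2] at heq
        exact heq
  have hy2 := sepT2_ncard R (fun {a b} => hsym) y
  have hyr2 := sepT2_ncard R (fun {a b} => hsym) (y * r)
  rw [lenR_eq_ncard, lenR_eq_ncard]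
  omega

end AffW
namespace AffW

variable {d : ℕ}

/-! ### Cyclic successor / predecessor on a finite subset of `Fin d` -/

/-- Cyclic successor within `S` (identity off `S`). -/
def nxt (S : Finset (Fin d)) (i : Fin d) : Fin d :=
  if hi : i ∈ S then
    if h : (S.filter (fun s => i < s)).Nonempty then (S.filter (fun s => i < s)).min' h
    else S.min' ⟨i, hi⟩
  else i

/-- Cyclic predecessor within `S` (identity off `S`). -/
def prv (S : Finset (Fin d)) (i : Fin d) : Fin d :=
  if hi : i ∈ S then
    if h : (S.filter (fun s => s < i)).Nonempty then (S.filter (fun s => s < i)).max' h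
    else S.max' ⟨i, hi⟩
  else i

lemma nxt_of_not_mem {S : Finset (Fin d)} {i : Fin d} (h : i ∉ S) : nxt S i = i := dif_neg h

lemma prv_of_not_mem {S : Finset (Fin d)} {i : Fin d} (h : i ∉ S) : prv S i = i := dif_neg h

lemma nxt_spec1 {S : Finset (Fin d)} {i n : Fin d} (hi : i ∈ S) (hn : n ∈ S) (hin : i < n)
    (hmin : ∀ s ∈ S, i < s → n ≤ s) : nxt S i = n := by
  have hne : (S.filter (fun s => i < s)).Nonempty := ⟨n, Finset.mem_filter.2 ⟨hn, hin⟩⟩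
  rw [nxt, dif_pos hi, dif_pos hne]
  apply le_antisymm
  · have hmm : n ∈ S.filter (fun s => i < s) := Finset.mem_filter.2 ⟨hn, hin⟩
    exact Finset.min'_le _ n hmm
  · have hmem := Finset.min'_mem _ hne
    rw [Finset.mem_filter] at hmem
    exact hmin _ hmem.1 hmem.2

lemma nxt_spec2 {S : Finset (Fin d)} {i : Fin d} (hi : i ∈ S) (hmax : ∀ s ∈ S, s ≤ i) :
    nxt S i = S.min' ⟨i, hi⟩ := by
  have hne : ¬ (S.filter (fun s => i < s)).Nonempty := by
    rintro ⟨s, hs⟩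
    rw [Finset.mem_filter] at hs
    exact absurd hs.2 (not_lt.2 (hmax s hs.1))
  rw [nxt, dif_pos hi, dif_neg hne]

lemma prv_spec1 {S : Finset (Fin d)} {i p : Fin d} (hi : i ∈ S) (hp : p ∈ S) (hpi : p < i)
    (hmax : ∀ s ∈ S, s < i → s ≤ p) : prv S i = p := by
  have hne : (S.filter (fun s => s < i)).Nonempty := ⟨p, Finset.mem_filter.2 ⟨hp, hpi⟩⟩
  rw [prv, dif_pos hi, dif_pos hne]
  apply le_antisymm
  · have hmem := Finset.max'_mem _ hne
    rw [Finset.mem_filter] at hmem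
    exact hmax _ hmem.1 hmem.2
  · have hmm : p ∈ S.filter (fun s => s < i) := Finset.mem_filter.2 ⟨hp, hpi⟩
    exact Finset.le_max' _ p hmm

lemma prv_spec2 {S : Finset (Fin d)} {i : Fin d} (hi : i ∈ S) (hmin : ∀ s ∈ S, i ≤ s) :
    prv S i = S.max' ⟨i, hi⟩ := by
  have hne : ¬ (S.filter (fun s => s < i)).Nonempty := by
    rintro ⟨s, hs⟩
    rw [Finset.mem_filter] at hs
    exact absurd hs.2 (not_lt.2 (hmin s hs.1))
  rw [prv, dif_pos hi, dif_neg hne]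

lemma nxt_cases {S : Finset (Fin d)} {i : Fin d} (hi : i ∈ S) :
    (nxt S i ∈ S ∧ i < nxt S i ∧ ∀ s ∈ S, i < s → nxt S i ≤ s) ∨
    (nxt S i = S.min' ⟨i, hi⟩ ∧ ∀ s ∈ S, s ≤ i) := by
  by_cases h : (S.filter (fun s => i < s)).Nonempty
  · left
    rw [nxt, dif_pos hi, dif_pos h]
    have hmem := Finset.min'_mem _ h
    rw [Finset.mem_filter] at hmem
    refine ⟨hmem.1, hmem.2, fun s hs hlt => ?_⟩
    have hmm : s ∈ S.filter (fun s' => i < s') := Finset.mem_filter.2 ⟨hs, hlt⟩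
    exact Finset.min'_le _ s hmm
  · right
    rw [nxt, dif_pos hi, dif_neg h]
    refine ⟨rfl, fun s hs => ?_⟩
    by_contra hcon
    exact h ⟨s, Finset.mem_filter.2 ⟨hs, not_le.1 hcon⟩⟩

lemma prv_cases {S : Finset (Fin d)} {i : Fin d} (hi : i ∈ S) :
    (prv S i ∈ S ∧ prv S i < i ∧ ∀ s ∈ S, s < i → s ≤ prv S i) ∨
    (prv S i = S.max' ⟨i, hi⟩ ∧ ∀ s ∈ S, i ≤ s) := by
  by_cases h : (S.filter (fun s => s < i)).Nonempty
  · left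
    rw [prv, dif_pos hi, dif_pos h]
    have hmem := Finset.max'_mem _ h
    rw [Finset.mem_filter] at hmem
    refine ⟨hmem.1, hmem.2, fun s hs hlt => ?_⟩
    have hmm : s ∈ S.filter (fun s' => s' < i) := Finset.mem_filter.2 ⟨hs, hlt⟩
    exact Finset.le_max' _ s hmm
  · right
    rw [prv, dif_pos hi, dif_neg h]
    refine ⟨rfl, fun s hs => ?_⟩
    by_contra hcon
    exact h ⟨s, Finset.mem_filter.2 ⟨hs, not_le.1 hcon⟩⟩

lemma nxt_mem {S : Finset (Fin d)} {i : Fin d} (hi : i ∈ S) : nxt S i ∈ S := by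
  rcases nxt_cases hi with h | h
  · exact h.1
  · rw [h.1]; exact S.min'_mem _

lemma prv_mem {S : Finset (Fin d)} {i : Fin d} (hi : i ∈ S) : prv S i ∈ S := by
  rcases prv_cases hi with h | h
  · exact h.1
  · rw [h.1]; exact S.max'_mem _

lemma prv_nxt (S : Finset (Fin d)) (i : Fin d) : prv S (nxt S i) = i := by
  by_cases hi : i ∈ S
  · rcases nxt_cases hi with ⟨hmem, hlt, hmin⟩ | ⟨he, hmax⟩
    · refine prv_spec1 hmem hi hlt fun s hs hlt' => ?_
      by_contra hcon
      exact absurd (hmin s hs (not_le.1 hcon)) (not_le.2 hlt')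
    · have himax : i = S.max' ⟨i, hi⟩ := le_antisymm (Finset.le_max' S i hi)
        (Finset.max'_le _ _ _ hmax)
      rw [he]
      exact (prv_spec2 (S.min'_mem _) (fun s hs => Finset.min'_le S s hs)).trans himax.symm
  · rw [nxt_of_not_mem hi, prv_of_not_mem hi]

lemma nxt_prv (S : Finset (Fin d)) (i : Fin d) : nxt S (prv S i) = i := by
  by_cases hi : i ∈ S
  · rcases prv_cases hi with ⟨hmem, hlt, hmax⟩ | ⟨he, hmin⟩
    · refine nxt_spec1 hmem hi hlt fun s hs hlt' => ?_
      by_contra hcon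
      exact absurd (hmax s hs (not_le.1 hcon)) (not_le.2 hlt')
    · have himin : i = S.min' ⟨i, hi⟩ := le_antisymm
        (Finset.le_min' S ⟨i, hi⟩ i (fun s hs => hmin s hs)) (Finset.min'_le S i hi)
      rw [he]
      exact (nxt_spec2 (S.max'_mem _) (fun s hs => Finset.le_max' S s hs)).trans himin.symm
  · rw [prv_of_not_mem hi, nxt_of_not_mem hi]

variable [NeZero d]

/-- `max` of a finset of `Fin d`, defaulting to `0`. -/
def mx (S : Finset (Fin d)) : Fin d := if h : S.Nonempty then S.max' h else 0

/-- `min` of a finset of `Fin d`, defaulting to `0`. -/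
def mn (S : Finset (Fin d)) : Fin d := if h : S.Nonempty then S.min' h else 0

lemma mx_eq {S : Finset (Fin d)} (hS : S.Nonempty) : mx S = S.max' hS := dif_pos hS
lemma mn_eq {S : Finset (Fin d)} (hS : S.Nonempty) : mn S = S.min' hS := dif_pos hS

lemma mx_mem {S : Finset (Fin d)} (hS : S.Nonempty) : mx S ∈ S := by
  rw [mx_eq hS]; exact S.max'_mem hS
lemma mn_mem {S : Finset (Fin d)} (hS : S.Nonempty) : mn S ∈ S := by
  rw [mn_eq hS]; exact S.min'_mem hS
lemma le_mx {S : Finset (Fin d)} (hS : S.Nonempty) {s : Fin d} (hs : s ∈ S) : s ≤ mx S := by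
  rw [mx_eq hS]; exact Finset.le_max' S s hs
lemma mn_le {S : Finset (Fin d)} (hS : S.Nonempty) {s : Fin d} (hs : s ∈ S) : mn S ≤ s := by
  rw [mn_eq hS]; exact Finset.min'_le S s hs

/-- The permutation `σ_S` (cyclic shift downwards on `S`). -/
def sigmaS (S : Finset (Fin d)) : Equiv.Perm (Fin d) :=
  ⟨prv S, nxt S, nxt_prv S, prv_nxt S⟩

/-- The admissible element attached to a nonempty subset `S` of `Fin d`. -/
def xS (S : Finset (Fin d)) : AffW d := ⟨Pi.single (mx S) 1, sigmaS S⟩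

lemma xS_w_apply (S : Finset (Fin d)) (i : Fin d) : (xS S).w i = prv S i := rfl
lemma xS_winv_apply (S : Finset (Fin d)) (i : Fin d) : (xS S).w⁻¹ i = nxt S i := rfl
lemma xS_t (S : Finset (Fin d)) : (xS S).t = Pi.single (mx S) 1 := rfl

lemma prv_singleton (j i : Fin d) : prv {j} i = i := by
  by_cases hi : i ∈ ({j} : Finset (Fin d))
  · rw [Finset.mem_singleton] at hi
    subst hi
    rw [prv_spec2 (Finset.mem_singleton_self i) (fun s hs => by
      rw [Finset.mem_singleton] at hs; exact hs.ge)]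
    exact Finset.max'_singleton i
  · exact prv_of_not_mem hi

lemma xS_singleton (j : Fin d) : xS {j} = transl (Pi.single j 1) := by
  ext i
  · show Pi.single (mx {j}) 1 i = Pi.single j 1 i
    rw [mx_eq (Finset.singleton_nonempty j), Finset.max'_singleton]
  · have h1 : (xS {j} : AffW d).w i = i := prv_singleton j i
    have h2 : (transl (Pi.single j (1:ℤ)) : AffW d).w i = i := rfl
    rw [h1, h2]

/-- Membership in `S` can be read off from `xS S`. -/
lemma mem_xS_char {S : Finset (Fin d)} (hS : S.Nonempty) (i : Fin d) :
    i ∈ S ↔ (prv S i ≠ i ∨ (xS S).t i ≠ 0) := by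
  constructor
  · intro hi
    by_cases hp : prv S i = i
    · right
      rcases prv_cases hi with ⟨_, hlt, _⟩ | ⟨he, hmin⟩
      · exact absurd hp (ne_of_lt hlt)
      · have hieq : i = S.max' ⟨i, hi⟩ := by rw [← he, hp]
        have hmxi : mx S = i := by rw [mx_eq ⟨i, hi⟩, ← hieq]
        rw [xS_t, hmxi, Pi.single_eq_same]
        exact one_ne_zero
    · exact Or.inl hp
  · intro h
    by_contra hcon
    rcases h with h | h
    · exact h (prv_of_not_mem hcon)
    · apply h
      rw [xS_t, Pi.single_eq_of_ne]
      intro he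
      rw [he] at hcon
      exact hcon (mx_mem hS)

lemma xS_inj {S S' : Finset (Fin d)} (hS : S.Nonempty) (hS' : S'.Nonempty)
    (h : xS S = xS S') : S = S' := by
  ext i
  rw [mem_xS_char hS i, mem_xS_char hS' i]
  constructor
  · rintro (h1 | h1)
    · left; rwa [show prv S i = prv S' i from congrArg (fun x : AffW d => x.w i) h] at h1
    · right; rwa [show (xS S).t i = (xS S').t i from congrArg (fun x : AffW d => x.t i) h] at h1
  · rintro (h1 | h1)
    · left; rwa [show prv S i = prv S' i from congrArg (fun x : AffW d => x.w i) h]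
    · right; rwa [show (xS S).t i = (xS S').t i from congrArg (fun x : AffW d => x.t i) h]

end AffW
namespace AffW

variable {d : ℕ} [NeZero d]

/-- Partner of `m` for insertion into `S`: the cyclic successor of `m` in `insert m S`. -/
def partner (S : Finset (Fin d)) (m : Fin d) : Fin d := nxt (insert m S) m

/-- The reflection inserting `m` into `S`. -/
def insRefl (S : Finset (Fin d)) (m : Fin d) : AffW d :=
  reflOf m (partner S m) (if mx S < m then 1 else 0)

lemma partner_spec_lt {S : Finset (Fin d)} {m : Fin d} (hS : S.Nonempty) (hm : m ∉ S)
    (hlt : m < mx S) :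
    partner S m ∈ S ∧ m < partner S m ∧ ∀ s ∈ S, m < s → partner S m ≤ s := by
  have hmem : m ∈ insert m S := Finset.mem_insert_self m S
  rcases nxt_cases hmem with ⟨h1, h2, h3⟩ | ⟨_, h2⟩
  · refine ⟨?_, h2, fun s hs hlt' => h3 s (Finset.mem_insert_of_mem hs) hlt'⟩
    rcases Finset.mem_insert.1 h1 with he | he
    · rw [he] at h2; exact absurd h2 (lt_irrefl m)
    · exact he
  · exact absurd (h2 (mx S) (Finset.mem_insert_of_mem (mx_mem hS))) (not_le.2 hlt)

lemma partner_spec_gt {S : Finset (Fin d)} {m : Fin d} (hS : S.Nonempty) (hm : m ∉ S)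
    (hgt : mx S < m) : partner S m = mn S := by
  have hmem : m ∈ insert m S := Finset.mem_insert_self m S
  rcases nxt_cases hmem with ⟨h1, h2, _⟩ | ⟨he, _⟩
  · exfalso
    rcases Finset.mem_insert.1 h1 with he | he
    · rw [he] at h2; exact absurd h2 (lt_irrefl m)
    · exact absurd h2 (not_lt.2 (le_of_lt (lt_of_le_of_lt (le_mx hS he) hgt)))
  · rw [partner, he]
    apply le_antisymm
    · exact Finset.min'_le _ _ (Finset.mem_insert_of_mem (mn_mem hS))
    · apply Finset.le_min'
      intro s hs
      rcases Finset.mem_insert.1 hs with he' | he'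
      · rw [he']
        exact le_of_lt (lt_of_le_of_lt (mn_le hS (mx_mem hS)) hgt)
      · exact mn_le hS he'

lemma partner_mem {S : Finset (Fin d)} {m : Fin d} (hS : S.Nonempty) (hm : m ∉ S) :
    partner S m ∈ S := by
  rcases lt_trichotomy m (mx S) with h | h | h
  · exact (partner_spec_lt hS hm h).1
  · exact absurd (h ▸ hm) (fun hc => hc (mx_mem hS))
  · rw [partner_spec_gt hS hm h]; exact mn_mem hS

lemma partner_ne {S : Finset (Fin d)} {m : Fin d} (hS : S.Nonempty) (hm : m ∉ S) :
    m ≠ partner S m := fun h => hm (h ▸ partner_mem hS hm)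

lemma mx_insert_lt {S : Finset (Fin d)} {m : Fin d} (hS : S.Nonempty) (hlt : m < mx S) :
    mx (insert m S) = mx S := by
  have hS' : (insert m S).Nonempty := ⟨m, Finset.mem_insert_self m S⟩
  rw [mx_eq hS', mx_eq hS]
  apply le_antisymm
  · apply Finset.max'_le
    intro s hs
    rcases Finset.mem_insert.1 hs with he | he
    · rw [he]; exact le_of_lt (by rwa [mx_eq hS] at hlt)
    · exact Finset.le_max' S s he
  · exact Finset.le_max' _ _ (Finset.mem_insert_of_mem (S.max'_mem hS))

lemma mx_insert_gt {S : Finset (Fin d)} {m : Fin d} (hS : S.Nonempty) (hgt : mx S < m) :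
    mx (insert m S) = m := by
  have hS' : (insert m S).Nonempty := ⟨m, Finset.mem_insert_self m S⟩
  rw [mx_eq hS']
  apply le_antisymm
  · apply Finset.max'_le
    intro s hs
    rcases Finset.mem_insert.1 hs with he | he
    · exact he.le
    · exact le_of_lt (lt_of_le_of_lt (le_mx hS he) hgt)
  · exact Finset.le_max' _ _ (Finset.mem_insert_self m S)

lemma nxt_eq_self_of_mem_iff {S : Finset (Fin d)} {m i : Fin d} (hm : m ∉ S) :
    nxt S i = m ↔ i = m := by
  constructor
  · intro h
    by_cases hi : i ∈ S
    · exact absurd (h ▸ nxt_mem hi) hm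
    · rwa [nxt_of_not_mem hi] at h
  · intro h
    subst h
    exact nxt_of_not_mem hm

lemma nxt_eq_mn_iff {S : Finset (Fin d)} (hS : S.Nonempty) {i : Fin d} (hi : i ∈ S) :
    nxt S i = mn S ↔ i = mx S := by
  constructor
  · intro h
    rcases nxt_cases hi with ⟨_, hlt, _⟩ | ⟨_, hmax⟩
    · exfalso
      rw [h] at hlt
      exact absurd hlt (not_lt.2 (mn_le hS hi))
    · exact le_antisymm (le_mx hS hi) ((mx_mem hS) |> hmax _)
  · intro h
    subst h
    rw [nxt_spec2 (mx_mem hS) (fun s hs => le_mx hS hs), ← mn_eq hS]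

/-- Key multiplication: inserting `m` into `S`. -/
lemma xS_mul_ins {S : Finset (Fin d)} {m : Fin d} (hS : S.Nonempty) (hm : m ∉ S) :
    xS S * insRefl S m = xS (insert m S) := by
  classical
  set q : Fin d := partner S m with hqdef
  have hS' : (insert m S).Nonempty := ⟨m, Finset.mem_insert_self m S⟩
  have hmq : m ≠ q := partner_ne hS hm
  have hqS : q ∈ S := partner_mem hS hm
  have hmmx : m ≠ mx S := fun h => hm (h ▸ mx_mem hS)
  -- the permutation part
  have key : ∀ i, prv S (Equiv.swap m q i) = prv (insert m S) i := by
    intro i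
    by_cases him : i = m
    · subst him
      rw [Equiv.swap_apply_left]
      rcases lt_or_gt_of_ne hmmx with hlt | hgt
      · obtain ⟨hq1, hq2, hq3⟩ := partner_spec_lt hS hm hlt
        rw [← hqdef] at hq1 hq2 hq3
        by_cases hbelow : (S.filter (fun s => s < i)).Nonempty
        · set p : Fin d := (S.filter (fun s => s < i)).max' hbelow with hpdef
          have hpmem := Finset.max'_mem _ hbelow
          rw [Finset.mem_filter, ← hpdef] at hpmem
          have hple : ∀ s ∈ S, s < i → s ≤ p := by
            intro s hs hlt'
            have hmm : s ∈ S.filter (fun s' => s' < i) := Finset.mem_filter.2 ⟨hs, hlt'⟩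
            exact Finset.le_max' _ s hmm
          have e1 : prv S q = p := by
            apply prv_spec1 hq1 hpmem.1 (lt_trans hpmem.2 hq2)
            intro s hs hlt'
            by_contra hcon
            push_neg at hcon
            have hsm : ¬ s < i := fun hsi => absurd (hple s hs hsi) (not_le.2 hcon)
            have hsm2 : i < s := lt_of_le_of_ne (not_lt.1 hsm) (fun he => hm (he ▸ hs))
            exact absurd (hq3 s hs hsm2) (not_le.2 hlt')
          have e2 : prv (insert i S) i = p := by
            apply prv_spec1 (Finset.mem_insert_self i S)
              (Finset.mem_insert_of_mem hpmem.1) hpmem.2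
            intro s hs hlt'
            rcases Finset.mem_insert.1 hs with he | he
            · exact absurd (he ▸ hlt') (lt_irrefl i)
            · exact hple s he hlt'
          rw [e1, e2]
        · -- nothing below m in S
          have hall : ∀ s ∈ S, i < s := by
            intro s hs
            rcases lt_trichotomy i s with h | h | h
            · exact h
            · exact absurd (h ▸ hs) hm
            · have hmm : s ∈ S.filter (fun s' => s' < i) := Finset.mem_filter.2 ⟨hs, h⟩
              exact absurd (⟨s, hmm⟩ : (S.filter (fun s' => s' < i)).Nonempty) hbelow
          have hqmn : q = mn S := by
            apply le_antisymm
            · exact hq3 (mn S) (mn_mem hS) (hall _ (mn_mem hS))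
            · exact mn_le hS hq1
          have e1 : prv S q = mx S := by
            rw [hqmn, mn_eq hS, prv_spec2 (S.min'_mem hS) (fun s hs => Finset.min'_le S s hs),
              ← mx_eq hS]
          have e2 : prv (insert i S) i = mx S := by
            rw [prv_spec2 (Finset.mem_insert_self i S) (fun s hs => ?_)]
            · rw [← mx_eq hS']
              rw [mx_insert_lt hS hlt]
            · rcases Finset.mem_insert.1 hs with he | he
              · exact he.ge
              · exact le_of_lt (hall s he)
          rw [e1, e2]
      · -- m > mx S
        have hqmn : q = mn S := partner_spec_gt hS hm hgt
        have e1 : prv S q = mx S := by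
          rw [hqmn, mn_eq hS, prv_spec2 (S.min'_mem hS) (fun s hs => Finset.min'_le S s hs),
            ← mx_eq hS]
        have e2 : prv (insert i S) i = mx S := by
          apply prv_spec1 (Finset.mem_insert_self i S)
            (Finset.mem_insert_of_mem (mx_mem hS)) hgt
          intro s hs hlt'
          rcases Finset.mem_insert.1 hs with he | he
          · exact absurd (he ▸ hlt') (lt_irrefl i)
          · exact le_mx hS he
        rw [e1, e2]
    · by_cases hiq : i = q
      · rw [hiq, Equiv.swap_apply_right, prv_of_not_mem hm]
        rcases lt_or_gt_of_ne hmmx with hlt | hgt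
        · obtain ⟨hq1, hq2, hq3⟩ := partner_spec_lt hS hm hlt
          rw [← hqdef] at hq1 hq2 hq3
          symm
          apply prv_spec1 (Finset.mem_insert_of_mem hq1) (Finset.mem_insert_self m S) hq2
          intro s hs hlt'
          rcases Finset.mem_insert.1 hs with he | he
          · exact he.le
          · by_contra hcon
            push_neg at hcon
            exact absurd (hq3 s he hcon) (not_le.2 hlt')
        · have hqmn : q = mn S := partner_spec_gt hS hm hgt
          symm
          have hq1 : q ∈ insert m S := Finset.mem_insert_of_mem hqS
          rw [prv_spec2 hq1 (fun s hs => ?_)]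
          · apply le_antisymm
            · apply Finset.max'_le
              intro s hs
              rcases Finset.mem_insert.1 hs with he | he
              · exact he.le
              · exact le_of_lt (lt_of_le_of_lt (le_mx hS he) hgt)
            · exact Finset.le_max' _ _ (Finset.mem_insert_self m S)
          · rcases Finset.mem_insert.1 hs with he | he
            · rw [he, hqmn]
              exact le_of_lt (lt_of_le_of_lt (mn_le hS (mx_mem hS)) hgt)
            · rw [hqmn]; exact mn_le hS he
      · rw [Equiv.swap_apply_of_ne_of_ne him hiq]
        by_cases hiS : i ∈ S
        · by_cases hfi : (S.filter (fun s => s < i)).Nonempty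
          · set p : Fin d := (S.filter (fun s => s < i)).max' hfi with hpdef
            have hpmem := Finset.max'_mem _ hfi
            rw [Finset.mem_filter, ← hpdef] at hpmem
            have hple : ∀ s ∈ S, s < i → s ≤ p := by
              intro s hs hlt'
              have hmm : s ∈ S.filter (fun s' => s' < i) := Finset.mem_filter.2 ⟨hs, hlt'⟩
              exact Finset.le_max' _ s hmm
            have e1 : prv S i = p := prv_spec1 hiS hpmem.1 hpmem.2 hple
            have e2 : prv (insert m S) i = p := by
              apply prv_spec1 (Finset.mem_insert_of_mem hiS)
                (Finset.mem_insert_of_mem hpmem.1) hpmem.2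
              intro s hs hlt'
              rcases Finset.mem_insert.1 hs with he | he
              · -- s = m, m < i : show m ≤ p
                subst he
                by_contra hcon
                push_neg at hcon
                -- p < m < i
                rcases lt_or_gt_of_ne hmmx with hlt2 | hgt2
                · obtain ⟨hq1, hq2, hq3⟩ := partner_spec_lt hS hm hlt2
                  rw [← hqdef] at hq1 hq2 hq3
                  have hqi : q ≤ i := hq3 i hiS hlt'
                  have : q = i := by
                    rcases lt_or_eq_of_le hqi with h | h
                    · exact absurd (hple q hq1 h) (not_le.2 (lt_trans hcon hq2))
                    · exact h
                  exact hiq this.symm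
                · exact absurd hlt' (not_lt.2 (le_of_lt (lt_of_le_of_lt (le_mx hS hiS) hgt2)))
              · exact hple s he hlt'
            rw [e1, e2]
          · -- i is minimal in S
            have hall : ∀ s ∈ S, i ≤ s := by
              intro s hs
              by_contra hcon
              exact hfi ⟨s, Finset.mem_filter.2 ⟨hs, not_le.1 hcon⟩⟩
            have himn : i = mn S := by
              rw [mn_eq hS]
              exact le_antisymm (Finset.le_min' S hS i hall) (Finset.min'_le S i hiS)
            have hmi : i < m := by
              rcases lt_trichotomy i m with h | h | h
              · exact h
              · exact absurd h him
              · exfalso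
                rcases lt_or_gt_of_ne hmmx with hlt2 | hgt2
                · obtain ⟨hq1, hq2, hq3⟩ := partner_spec_lt hS hm hlt2
                  rw [← hqdef] at hq1 hq2 hq3
                  have := hq3 i hiS h
                  have : q = i := le_antisymm this (by
                    have := hall q hq1
                    exact this)
                  exact hiq this.symm
                · have hqmn : q = mn S := partner_spec_gt hS hm hgt2
                  exact hiq (himn.trans hqmn.symm)
            have e1 : prv S i = mx S := by
              rw [prv_spec2 hiS hall, ← mx_eq hS]
            have e2 : prv (insert m S) i = mx (insert m S) := by
              rw [prv_spec2 (Finset.mem_insert_of_mem hiS) (fun s hs => ?_),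
                ← mx_eq hS']
              rcases Finset.mem_insert.1 hs with he | he
              · rw [he]; exact le_of_lt hmi
              · exact hall s he
            rw [e1, e2]
            rcases lt_or_gt_of_ne hmmx with hlt2 | hgt2
            · rw [mx_insert_lt hS hlt2]
            · exfalso
              have hqmn : q = mn S := partner_spec_gt hS hm hgt2
              exact hiq (himn.trans hqmn.symm)
        · have hiS' : i ∉ insert m S := by
            rw [Finset.mem_insert]
            push_neg
            exact ⟨him, hiS⟩
          rw [prv_of_not_mem hiS, prv_of_not_mem hiS']
  -- now conclude
  ext i
  · show (xS S).t i + (insRefl S m).t (nxt S i)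
        = (Pi.single (mx (insert m S)) (1:ℤ) : Fin d → ℤ) i
    rw [xS_t]
    show (Pi.single (mx S) (1:ℤ) : Fin d → ℤ) i
        + (reflOf m q (if mx S < m then 1 else 0)).t (nxt S i) = _
    rcases lt_or_gt_of_ne hmmx with hlt | hgt
    · rw [if_neg (not_lt.2 (le_of_lt hlt)), mx_insert_lt hS hlt]
      have hz : (reflOf m q 0).t (nxt S i) = 0 := by
        rw [reflOf_t hmq]
        split_ifs <;> norm_num
      rw [hz, add_zero]
    · rw [if_pos hgt, mx_insert_gt hS hgt, reflOf_t hmq]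
      have hqmn : q = mn S := partner_spec_gt hS hm hgt
      by_cases h1 : nxt S i = m
      · have him : i = m := (nxt_eq_self_of_mem_iff hm).1 h1
        rw [if_pos h1, him, Pi.single_eq_of_ne hmmx, Pi.single_eq_same]
        norm_num
      · rw [if_neg h1]
        have him : i ≠ m := fun hc => h1 (by rw [hc, nxt_of_not_mem hm])
        rw [Pi.single_eq_of_ne him]
        by_cases h2 : nxt S i = q
        · have hiS : i ∈ S := by
            by_contra hiS
            rw [nxt_of_not_mem hiS] at h2
            apply hiS
            rw [h2, hqmn]
            exact mn_mem hS
          have himx : i = mx S := (nxt_eq_mn_iff hS hiS).1 (by rw [h2, hqmn])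
          rw [if_pos h2, himx, Pi.single_eq_same]
          norm_num
        · have himx : i ≠ mx S := by
            intro hc
            apply h2
            rw [hc, nxt_spec2 (mx_mem hS) (fun s hs => le_mx hS hs), ← mn_eq hS, hqmn]
          rw [if_neg h2, Pi.single_eq_of_ne himx]
          norm_num
  · have h1 : ((xS S * insRefl S m).w i : Fin d) = prv S (Equiv.swap m q i) := rfl
    have h2 : ((xS (insert m S)).w i : Fin d) = prv (insert m S) i := rfl
    rw [h1, h2, key]

end AffW
namespace AffW

variable {d : ℕ} [NeZero d]

lemma act_xS (S : Finset (Fin d)) (a : Fin d) :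
    act (xS S) (base d) a = (if a = mx S then (1:ℚ) else 0) + base d (nxt S a) := by
  show ((xS S).t a : ℚ) + base d ((xS S).w⁻¹ a) = _
  rw [xS_winv_apply, xS_t]
  congr 1
  rw [Pi.single_apply]
  split_ifs <;> norm_num

/-- The parametrization of the separating hyperplanes of `xS S`. -/
def phiS (S : Finset (Fin d)) (j' : Fin d) : Fin d × Fin d × ℤ :=
  if j' < mn S then (j', mx S, -1) else (prv (insert j' S) j', j', 0)

lemma sepT_xS {R : Fin d → Fin d → Prop}
    (hsym : ∀ {a b : Fin d}, R a b → R b a)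
    (htrans : ∀ {a b c : Fin d}, R a b → R b c → R a c)
    {S : Finset (Fin d)} (hS : S.Nonempty) {c₀ : Fin d} (hSc : ∀ s ∈ S, R s c₀) :
    SepT R (xS S) = phiS S '' {i : Fin d | R i c₀ ∧ i ∉ S} := by
  have hmnmx : mn S ≤ mx S := mn_le hS (mx_mem hS)
  have hnxtmx : nxt S (mx S) = mn S := by
    rw [nxt_spec2 (mx_mem hS) (fun s hs => le_mx hS hs), ← mn_eq hS]
  ext ⟨i, j, k⟩
  constructor
  · rintro ⟨hij, hRij, hsep⟩
    dsimp only at hij hRij hsep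
    unfold Separates at hsep
    rw [act_xS, act_xS] at hsep
    by_cases himx : i = mx S
    · -- region A : i = mx S (so j > mx S, j ∉ S)
      subst himx
      have hjS : j ∉ S := fun hc => absurd (le_mx hS hc) (not_le.2 hij)
      have hjmx : j ≠ mx S := ne_of_gt hij
      rw [if_pos rfl, if_neg hjmx, hnxtmx, nxt_of_not_mem hjS] at hsep
      have hk0 : k = 0 := by
        by_contra hk
        have h1 := base_lt_base.2 hij
        have h2 := neg_one_lt_base_sub (mn S) j
        have h3 : base d (mn S) ≤ base d j := by
          rcases lt_or_eq_of_le (le_of_lt (lt_of_le_of_lt hmnmx hij)) with h | h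
          · exact le_of_lt (base_lt_base.2 h)
          · rw [h]
        rcases (by omega : k ≤ -1 ∨ 1 ≤ k) with hk1 | hk1
        · have hu : 0 < base d (mx S) - base d j - (k:ℚ) := by
            have : (k:ℚ) ≤ -1 := by exact_mod_cast hk1
            have := neg_one_lt_base_sub (mx S) j
            linarith
          have hv : 0 < 1 + base d (mn S) - (0 + base d j) - (k:ℚ) := by
            have : (k:ℚ) ≤ -1 := by exact_mod_cast hk1
            linarith
          nlinarith [hsep, mul_pos hu hv]
        · have hu : base d (mx S) - base d j - (k:ℚ) < 0 := by
            have : (1:ℚ) ≤ (k:ℚ) := by exact_mod_cast hk1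
            linarith
          have hv : 1 + base d (mn S) - (0 + base d j) - (k:ℚ) ≤ 0 := by
            have : (1:ℚ) ≤ (k:ℚ) := by exact_mod_cast hk1
            linarith
          nlinarith [hsep, hu, hv]
      subst hk0
      refine ⟨j, ⟨htrans (hsym hRij) (hSc (mx S) (mx_mem hS)), hjS⟩, ?_⟩
      rw [phiS, if_neg (not_lt.2 (le_trans hmnmx (le_of_lt hij)))]
      have hp : prv (insert j S) j = mx S := by
        apply prv_spec1 (Finset.mem_insert_self j S)
          (Finset.mem_insert_of_mem (mx_mem hS)) hij
        intro s hs hlt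
        rcases Finset.mem_insert.1 hs with he | he
        · exact absurd (he ▸ hlt) (lt_irrefl j)
        · exact le_mx hS he
      rw [hp]
    · by_cases hjmx : j = mx S
      · -- region B : j = mx S, i ≠ mx S : only k = -1, i < mn S, i ∉ S
        subst hjmx
        rw [if_neg himx, if_pos rfl, hnxtmx] at hsep
        have hu : 0 < base d i - base d (mx S) - (k:ℚ) ∨ k = 0 ∨ 1 ≤ k := by
          rcases (by omega : k ≤ -1 ∨ k = 0 ∨ 1 ≤ k) with h | h
          · left
            have : (k:ℚ) ≤ -1 := by exact_mod_cast h
            have := neg_one_lt_base_sub i (mx S)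
            linarith
          · right; exact h
        have hkneg : k = -1 := by
          by_contra hk
          rcases (by omega : k ≤ -2 ∨ 0 ≤ k) with hk1 | hk1
          · have hu : 0 < base d i - base d (mx S) - (k:ℚ) := by
              have : (k:ℚ) ≤ -2 := by exact_mod_cast hk1
              have := neg_one_lt_base_sub i (mx S)
              linarith
            have hv : 0 < 0 + base d (nxt S i) - (1 + base d (mn S)) - (k:ℚ) := by
              have : (k:ℚ) ≤ -2 := by exact_mod_cast hk1
              have := neg_one_lt_base_sub (nxt S i) (mn S)
              linarith
            nlinarith [hsep, mul_pos hu hv]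
          · have hu : base d i - base d (mx S) - (k:ℚ) < 0 := by
              have : (0:ℚ) ≤ (k:ℚ) := by exact_mod_cast hk1
              have hilt : base d i - base d (mx S) < 0 := by
                rcases lt_trichotomy i (mx S) with h | h | h
                · have := base_lt_base.2 h; linarith
                · exact absurd h himx
                · exact absurd h (not_lt.2 (le_of_lt hij))
              linarith
            have hv : 0 + base d (nxt S i) - (1 + base d (mn S)) - (k:ℚ) < 0 := by
              have : (0:ℚ) ≤ (k:ℚ) := by exact_mod_cast hk1
              have := base_sub_lt_one (nxt S i) (mn S)
              linarith
            nlinarith [hsep, mul_pos_of_neg_of_neg hu hv]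
        subst hkneg
        -- now: nxt S i < mn S, so i ∉ S and i < mn S
        have hvneg : base d (nxt S i) < base d (mn S) := by
          by_contra hcon
          push_neg at hcon
          have hu : 0 < base d i - base d (mx S) - ((-1 : ℤ):ℚ) := by
            have := neg_one_lt_base_sub i (mx S)
            push_cast
            linarith
          have hv : 0 ≤ 0 + base d (nxt S i) - (1 + base d (mn S)) - ((-1 : ℤ):ℚ) := by
            push_cast
            linarith
          nlinarith [hsep, hu, hv]
        have hnlt : nxt S i < mn S := base_lt_base.1 hvneg
        have hiS : i ∉ S := by
          intro hc
          exact absurd (mn_le hS (nxt_mem hc)) (not_le.2 hnlt)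
        rw [nxt_of_not_mem hiS] at hnlt
        refine ⟨i, ⟨htrans hRij (hSc (mx S) (mx_mem hS)), hiS⟩, ?_⟩
        rw [phiS, if_pos hnlt]
      · -- region C : i ≠ mx S, j ≠ mx S : only k = 0 with i ∈ S, j ∉ S in a gap
        rw [if_neg himx, if_neg hjmx] at hsep
        have hk0 : k = 0 := by
          by_contra hk
          rcases (by omega : k ≤ -1 ∨ 1 ≤ k) with hk1 | hk1
          · have hu : 0 < base d i - base d j - (k:ℚ) := by
              have : (k:ℚ) ≤ -1 := by exact_mod_cast hk1
              have := neg_one_lt_base_sub i j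
              linarith
            have hv : 0 < 0 + base d (nxt S i) - (0 + base d (nxt S j)) - (k:ℚ) := by
              have : (k:ℚ) ≤ -1 := by exact_mod_cast hk1
              have := neg_one_lt_base_sub (nxt S i) (nxt S j)
              linarith
            nlinarith [hsep, mul_pos hu hv]
          · have hu : base d i - base d j - (k:ℚ) < 0 := by
              have : (1:ℚ) ≤ (k:ℚ) := by exact_mod_cast hk1
              have := base_lt_base.2 hij
              linarith
            have hv : 0 + base d (nxt S i) - (0 + base d (nxt S j)) - (k:ℚ) < 0 := by
              have : (1:ℚ) ≤ (k:ℚ) := by exact_mod_cast hk1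
              have := base_sub_lt_one (nxt S i) (nxt S j)
              linarith
            nlinarith [hsep, mul_pos_of_neg_of_neg hu hv]
        subst hk0
        have hvpos : base d (nxt S j) < base d (nxt S i) := by
          by_contra hcon
          push_neg at hcon
          have hu : base d i - base d j - ((0:ℤ):ℚ) < 0 := by
            have := base_lt_base.2 hij
            push_cast
            linarith
          have hv : 0 + base d (nxt S i) - (0 + base d (nxt S j)) - ((0:ℤ):ℚ) ≤ 0 := by
            push_cast
            linarith
          nlinarith [hsep, hu, hv]
        have hnlt : nxt S j < nxt S i := base_lt_base.1 hvpos
        have hiS : i ∈ S := by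
          by_contra hiS
          rw [nxt_of_not_mem hiS] at hnlt
          by_cases hjS : j ∈ S
          · rcases nxt_cases hjS with ⟨_, hlt, _⟩ | ⟨he, hmax⟩
            · exact absurd (lt_trans hij hlt) (not_lt.2 (le_of_lt hnlt))
            · exact hjmx (le_antisymm (le_mx hS hjS) (hmax (mx S) (mx_mem hS)))
          · rw [nxt_of_not_mem hjS] at hnlt
            exact absurd hij (not_lt.2 (le_of_lt hnlt))
        have hjS : j ∉ S := by
          intro hjS
          rcases nxt_cases hjS with ⟨_, hlt, _⟩ | ⟨he, hmax⟩
          · -- nxt j > j ; and nxt i ≤ j since i < j both in S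
            rcases nxt_cases hiS with ⟨_, hlt2, hmin2⟩ | ⟨he2, hmax2⟩
            · exact absurd (lt_of_le_of_lt (le_trans (hmin2 j hjS hij) (le_of_lt hlt))
                (lt_of_le_of_lt (le_refl _) hnlt)) (lt_irrefl _)
            · exact himx (le_antisymm (le_mx hS hiS) (hmax2 (mx S) (mx_mem hS)))
          · exact hjmx (le_antisymm (le_mx hS hjS) (hmax (mx S) (mx_mem hS)))
        rw [nxt_of_not_mem hjS] at hnlt
        -- i ∈ S, j ∉ S, j < nxt S i : the triple is phiS j
        refine ⟨j, ⟨htrans (hsym hRij) (hSc i hiS), hjS⟩, ?_⟩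
        have hmnj : mn S ≤ j := le_trans (mn_le hS hiS) (le_of_lt hij)
        rw [phiS, if_neg (not_lt.2 hmnj)]
        have hp : prv (insert j S) j = i := by
          apply prv_spec1 (Finset.mem_insert_self j S) (Finset.mem_insert_of_mem hiS) hij
          intro s hs hlt
          rcases Finset.mem_insert.1 hs with he | he
          · exact absurd (he ▸ hlt) (lt_irrefl j)
          · rcases nxt_cases hiS with ⟨_, _, hmin2⟩ | ⟨he2, hmax2⟩
            · by_contra hcon
              push_neg at hcon
              exact absurd (hmin2 s he hcon) (not_le.2 (lt_trans hlt hnlt))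
            · exact absurd (le_antisymm (le_mx hS hiS) (hmax2 (mx S) (mx_mem hS))) himx
        rw [hp]
  · rintro ⟨j', ⟨hRj', hj'S⟩, heq⟩
    rw [← heq, phiS]
    by_cases hj'mn : j' < mn S
    · rw [if_pos hj'mn]
      have hj'mx : j' < mx S := lt_of_lt_of_le hj'mn hmnmx
      refine ⟨hj'mx, htrans hRj' (hsym (hSc (mx S) (mx_mem hS))), ?_⟩
      unfold Separates
      rw [act_xS, act_xS, if_neg (ne_of_lt hj'mx), if_pos rfl, hnxtmx,
        nxt_of_not_mem hj'S]
      have hu : 0 < base d j' - base d (mx S) - ((-1:ℤ):ℚ) := by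
        have := neg_one_lt_base_sub j' (mx S)
        push_cast
        linarith
      have hv : 0 + base d j' - (1 + base d (mn S)) - ((-1:ℤ):ℚ) < 0 := by
        have := base_lt_base.2 hj'mn
        push_cast
        linarith
      exact mul_neg_of_pos_of_neg hu hv
    · rw [if_neg hj'mn]
      push_neg at hj'mn
      have hmnj' : mn S < j' := lt_of_le_of_ne hj'mn (fun hc => hj'S (hc ▸ mn_mem hS))
      -- facts about p := prv (insert j' S) j'
      have hj'mem : j' ∈ insert j' S := Finset.mem_insert_self j' S
      have hcase := prv_cases hj'mem
      rcases hcase with ⟨hp1, hp2, hp3⟩ | ⟨_, hmin⟩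
      swap
      · exact absurd (hmin (mn S) (Finset.mem_insert_of_mem (mn_mem hS)))
          (not_le.2 hmnj')
      set p : Fin d := prv (insert j' S) j' with hpdef
      have hpS : p ∈ S := by
        rcases Finset.mem_insert.1 hp1 with he | he
        · exact absurd (he ▸ hp2) (lt_irrefl j')
        · exact he
      refine ⟨hp2, htrans (hSc p hpS) (hsym hRj'), ?_⟩
      unfold Separates
      rw [act_xS, act_xS, if_neg (fun hc : j' = mx S => hj'S (hc ▸ mx_mem hS)),
        nxt_of_not_mem hj'S]
      have hu : base d p - base d j' - ((0:ℤ):ℚ) < 0 := by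
        have := base_lt_base.2 hp2
        push_cast
        linarith
      by_cases hpmx : p = mx S
      · rw [if_pos hpmx]
        have hnp : nxt S p = mn S := by rw [hpmx]; exact hnxtmx
        rw [hnp]
        have hv : 0 < 1 + base d (mn S) - (0 + base d j') - ((0:ℤ):ℚ) := by
          have := neg_one_lt_base_sub (mn S) j'
          push_cast
          linarith
        exact mul_neg_of_neg_of_pos hu hv
      · rw [if_neg hpmx]
        have hnp : j' < nxt S p := by
          rcases nxt_cases hpS with ⟨hn1, hn2, hn3⟩ | ⟨_, hmax⟩
          · rcases lt_trichotomy (nxt S p) j' with h | h | h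
            · exact absurd (hp3 (nxt S p) (Finset.mem_insert_of_mem hn1) h)
                (not_le.2 hn2)
            · exact absurd (h ▸ nxt_mem hpS) hj'S
            · exact h
          · exact absurd (le_antisymm (le_mx hS hpS) (hmax (mx S) (mx_mem hS))) hpmx
        have hv : 0 < 0 + base d (nxt S p) - (0 + base d j') - ((0:ℤ):ℚ) := by
          have := base_lt_base.2 hnp
          push_cast
          linarith
        exact mul_neg_of_neg_of_pos hu hv

lemma phiS_injOn {S : Finset (Fin d)} (hS : S.Nonempty) :
    Set.InjOn (phiS S) {i : Fin d | True} := by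
  intro a _ b _ heq
  unfold phiS at heq
  by_cases h1 : a < mn S <;> by_cases h2 : b < mn S
  · rw [if_pos h1, if_pos h2] at heq
    exact congrArg Prod.fst heq
  · rw [if_pos h1, if_neg h2] at heq
    exact absurd (congrArg (fun p : Fin d × Fin d × ℤ => p.2.2) heq) (by norm_num)
  · rw [if_neg h1, if_pos h2] at heq
    exact absurd (congrArg (fun p : Fin d × Fin d × ℤ => p.2.2) heq) (by norm_num)
  · rw [if_neg h1, if_neg h2] at heq
    exact congrArg (fun p : Fin d × Fin d × ℤ => p.2.1) heq

lemma lenR_xS {R : Fin d → Fin d → Prop}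
    (hsym : ∀ {a b : Fin d}, R a b → R b a)
    (htrans : ∀ {a b c : Fin d}, R a b → R b c → R a c)
    {S : Finset (Fin d)} (hS : S.Nonempty) {c₀ : Fin d} (hSc : ∀ s ∈ S, R s c₀) :
    lenR R (xS S) = ({i : Fin d | R i c₀ ∧ i ∉ S}).ncard := by
  have hst := sepT_xS (R := R) hsym htrans hS hSc
  rw [lenR_eq_ncard, hst]
  exact Set.ncard_image_of_injOn ((phiS_injOn hS).mono (Set.subset_univ _))

end AffW
namespace AffW

variable {d : ℕ}

lemma base_nonpos (a : Fin d) : base d a ≤ 0 := by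
  unfold base
  have hd : (0:ℚ) < d := by exact_mod_cast a.pos
  have ha : ((a:ℕ):ℚ) ≤ (d:ℚ) - 1 := by
    have := a.is_lt
    have : ((a:ℕ):ℚ) < (d:ℚ) := by exact_mod_cast this
    have hle : (a:ℕ) ≤ d - 1 := by omega
    have := Fin.is_lt a
    calc ((a:ℕ):ℚ) ≤ ((d - 1 : ℕ) : ℚ) := by exact_mod_cast hle
    _ ≤ (d:ℚ) - 1 := by
        have : (1:ℕ) ≤ d := a.pos
        push_cast [Nat.cast_sub this]
        linarith
  have hnum : (0:ℚ) ≤ (d:ℚ) - 1 - ((a:ℕ):ℚ) := by linarith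
  have : (0:ℚ) ≤ ((d:ℚ) - 1 - ((a:ℕ):ℚ)) / d := div_nonneg hnum (le_of_lt hd)
  linarith

lemma neg_one_lt_base (a : Fin d) : -1 < base d a := by
  unfold base
  have hd : (0:ℚ) < d := by exact_mod_cast a.pos
  have ha : (0:ℚ) ≤ ((a:ℕ):ℚ) := by positivity
  rw [neg_lt_neg_iff, div_lt_one hd]
  linarith

lemma reflOf_flip {i j : Fin d} (hij : i ≠ j) (k : ℤ) : reflOf i j k = reflOf j i (-k) := by
  ext a
  · show (reflOf i j k).t a = (reflOf j i (-k)).t a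
    rw [reflOf_t hij, reflOf_t (Ne.symm hij)]
    split_ifs with h1 h2 h2
    · exact absurd (h1.symm.trans h2) hij
    · omega
    · rfl
    · rfl
  · show ((Equiv.swap i j) a : ℕ) = ((Equiv.swap j i) a : ℕ)
    rw [Equiv.swap_comm]

variable [NeZero d]

lemma prv_eq_mx_iff {S : Finset (Fin d)} (hS : S.Nonempty) {a : Fin d} :
    prv S a = mx S ↔ a = mn S := by
  constructor
  · intro h
    have := congrArg (nxt S) h
    rw [nxt_prv] at this
    rw [this, nxt_spec2 (mx_mem hS) (fun s hs => le_mx hS hs), ← mn_eq hS]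
  · intro h
    subst h
    rw [mn_eq hS, prv_spec2 (S.min'_mem hS) (fun s hs => Finset.min'_le S s hs), ← mx_eq hS]

lemma qpt_xS {S : Finset (Fin d)} (hS : S.Nonempty) (a : Fin d) :
    act (ainv (xS S)) (base d) a
      = base d (prv S a) - (if a = mn S then (1:ℚ) else 0) := by
  show (-(((xS S).t ((xS S).w a)) : ℤ) : ℚ) + base d (((xS S).w⁻¹)⁻¹ a) = _
  rw [inv_inv]
  show (-(((xS S).t (prv S a)) : ℤ) : ℚ) + base d (prv S a) = _
  rw [xS_t]
  have : (Pi.single (mx S) (1:ℤ) : Fin d → ℤ) (prv S a) = if a = mn S then 1 else 0 := by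
    rw [Pi.single_apply]
    by_cases h : prv S a = mx S
    · rw [if_pos h, if_pos ((prv_eq_mx_iff hS).1 h)]
    · rw [if_neg h, if_neg (fun hc => h ((prv_eq_mx_iff hS).2 hc))]
  rw [this]
  push_cast
  split_ifs <;> ring

/-- Classification of reflections that can possibly lower the length from `xS S`. -/
lemma crossing_sol_lt {R : Fin d → Fin d → Prop}
    (hsym : ∀ {a b : Fin d}, R a b → R b a)
    (htrans : ∀ {a b c : Fin d}, R a b → R b c → R a c)
    {S : Finset (Fin d)} (hS : S.Nonempty) {c₀ : Fin d} (hSc : ∀ s ∈ S, R s c₀)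
    {i j : Fin d} {k : ℤ} (hij : i < j) (hRij : R i j)
    (hsep : sepAt (act (ainv (xS S)) (base d)) (base d) (i, j, k)) :
    ∃ m, R m c₀ ∧ m ∉ S ∧ reflOf i j k = insRefl S m := by
  rw [sepAt_def, qpt_xS hS, qpt_xS hS] at hsep
  have hbij := base_lt_base.2 hij
  have hbd : -1 < base d i - base d j := neg_one_lt_base_sub i j
  have hBp : ∀ a : Fin d, -1 < base d a := neg_one_lt_base
  have hBn : ∀ a : Fin d, base d a ≤ 0 := base_nonpos
  have hQub : ∀ a : Fin d, base d (prv S a) - (if a = mn S then (1:ℚ) else 0) ≤ 0 := by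
    intro a
    have := hBn (prv S a)
    split_ifs <;> linarith
  have hQlb : ∀ a : Fin d, -2 < base d (prv S a) - (if a = mn S then (1:ℚ) else 0) := by
    intro a
    have := hBp (prv S a)
    split_ifs <;> linarith
  -- rule out |k| ≥ 1 except k = -1
  rcases (by omega : k ≤ -2 ∨ k = -1 ∨ k = 0 ∨ 1 ≤ k) with hk | hk | hk | hk
  · exfalso
    have hkq : (k:ℚ) ≤ -2 := by exact_mod_cast hk
    have hu : 0 < base d i - base d j - (k:ℚ) := by linarith
    have hv : 0 < (base d (prv S i) - (if i = mn S then (1:ℚ) else 0))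
        - (base d (prv S j) - (if j = mn S then (1:ℚ) else 0)) - (k:ℚ) := by
      have := hQlb i
      have := hQub j
      linarith
    nlinarith [hsep, mul_pos hv hu]
  · -- k = -1 : above-max insertion
    subst hk
    have hkq : ((-1:ℤ):ℚ) = -1 := by norm_num
    have hu : 0 < base d i - base d j - ((-1:ℤ):ℚ) := by
      rw [hkq]; linarith
    have hQ : (base d (prv S i) - (if i = mn S then (1:ℚ) else 0))
        - (base d (prv S j) - (if j = mn S then (1:ℚ) else 0)) < -1 := by
      by_contra hcon
      push_neg at hcon
      have hv : 0 ≤ (base d (prv S i) - (if i = mn S then (1:ℚ) else 0))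
          - (base d (prv S j) - (if j = mn S then (1:ℚ) else 0)) - ((-1:ℤ):ℚ) := by
        rw [hkq]; linarith
      nlinarith [hsep, hu, hv]
    have himn : i = mn S := by
      by_contra hcon
      rw [if_neg hcon] at hQ
      have := hBp (prv S i)
      have := hQub j
      split_ifs at hQ <;> linarith [hBn (prv S j), hBp (prv S j)]
    have hjmn : j ≠ mn S := fun hc => (ne_of_lt hij) (himn.trans hc.symm)
    rw [if_pos himn, if_neg hjmn] at hQ
    -- base (prv i) - 1 - base (prv j) < -1, i.e. base mx < base (prv j), so prv j > mx
    have hpmx : prv S i = mx S := (prv_eq_mx_iff hS).2 himn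
    rw [hpmx] at hQ
    have hlt : base d (mx S) < base d (prv S j) := by linarith
    have hpj : mx S < prv S j := base_lt_base.1 hlt
    have hjS : j ∉ S := by
      intro hc
      exact absurd (le_mx hS (prv_mem hc)) (not_le.2 hpj)
    rw [prv_of_not_mem hjS] at hpj
    have hRj : R j c₀ := by
      rw [himn] at hRij
      exact htrans (hsym hRij) (hSc (mn S) (mn_mem hS))
    refine ⟨j, hRj, hjS, ?_⟩
    rw [insRefl, partner_spec_gt hS hjS hpj, if_pos hpj, himn]
    have hne2 : mn S ≠ j := by rw [← himn]; exact ne_of_lt hij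
    exact (reflOf_flip hne2 (-1)).trans (by rw [neg_neg])
  · -- k = 0
    subst hk
    have hu : base d i - base d j - ((0:ℤ):ℚ) < 0 := by push_cast; linarith
    have hQ : 0 < (base d (prv S i) - (if i = mn S then (1:ℚ) else 0))
        - (base d (prv S j) - (if j = mn S then (1:ℚ) else 0)) := by
      by_contra hcon
      push_neg at hcon
      have hv : (base d (prv S i) - (if i = mn S then (1:ℚ) else 0))
          - (base d (prv S j) - (if j = mn S then (1:ℚ) else 0)) - ((0:ℤ):ℚ) ≤ 0 := by
        push_cast; linarith
      nlinarith [hsep, hu, hv]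
    by_cases hjmn : j = mn S
    · -- below-min insertion
      have himn : i ≠ mn S := fun hc => (ne_of_lt hij) (hc.trans hjmn.symm)
      have hiltmn : i < mn S := by rwa [← hjmn]
      have hiS : i ∉ S := fun hc => absurd (mn_le hS hc) (not_le.2 hiltmn)
      refine ⟨i, htrans hRij (by rw [hjmn]; exact hSc (mn S) (mn_mem hS)), hiS, ?_⟩
      have himx : i < mx S := lt_of_lt_of_le hiltmn (mn_le hS (mx_mem hS))
      obtain ⟨hq1, hq2, hq3⟩ := partner_spec_lt hS hiS himx
      have hpart : partner S i = mn S := by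
        apply le_antisymm
        · exact hq3 (mn S) (mn_mem hS) hiltmn
        · exact mn_le hS hq1
      rw [insRefl, hpart, if_neg (not_lt.2 (le_of_lt himx)), ← hjmn]
    · by_cases hjS : j ∈ S
      · -- gap insertion : i ∉ S, prv j < i
        rw [if_neg hjmn] at hQ
        have hpj : ∀ s ∈ S, s < j → s ≤ prv S j := by
          rcases prv_cases hjS with ⟨_, _, h3⟩ | ⟨_, hmin⟩
          · exact h3
          · exfalso
            apply hjmn
            rw [mn_eq hS]
            exact le_antisymm (Finset.le_min' S hS j (fun s hs => hmin s hs))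
              (Finset.min'_le S j hjS)
        have hpjS : prv S j ∈ S := prv_mem hjS
        have hiS : i ∉ S := by
          intro hiS
          by_cases himn : i = mn S
          · rw [if_pos himn, (prv_eq_mx_iff hS).2 himn] at hQ
            have := base_sub_lt_one (mx S) (prv S j)
            linarith
          · rw [if_neg himn] at hQ
            have hpi : base d (prv S j) < base d (prv S i) := by linarith
            have hpi' : prv S j < prv S i := base_lt_base.1 hpi
            have hpiS : prv S i ∈ S := prv_mem hiS
            have hpii : prv S i < i := by
              rcases prv_cases hiS with ⟨_, h2, _⟩ | ⟨_, hmin⟩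
              · exact h2
              · exfalso
                apply himn
                rw [mn_eq hS]
                exact le_antisymm (Finset.le_min' S hS i (fun s hs => hmin s hs))
                  (Finset.min'_le S i hiS)
            exact absurd (hpj (prv S i) hpiS (lt_trans hpii hij)) (not_le.2 hpi')
        have himn : i ≠ mn S := fun hc => hiS (hc ▸ mn_mem hS)
        rw [if_neg himn, prv_of_not_mem hiS] at hQ
        have hpi : base d (prv S j) < base d i := by linarith
        have hpi' : prv S j < i := base_lt_base.1 hpi
        refine ⟨i, htrans hRij (hSc j hjS), hiS, ?_⟩
        have himx : i < mx S := lt_of_lt_of_le hij (le_mx hS hjS)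
        obtain ⟨hq1, hq2, hq3⟩ := partner_spec_lt hS hiS himx
        have hpart : partner S i = j := by
          apply le_antisymm
          · exact hq3 j hjS hij
          · by_contra hcon
            push_neg at hcon
            exact absurd (hpj (partner S i) hq1 hcon) (not_le.2 (lt_of_lt_of_le hpi'
              (le_of_lt hq2)))
        rw [insRefl, hpart, if_neg (not_lt.2 (le_of_lt himx))]
      · -- k = 0, j ∉ S : impossible
        exfalso
        rw [if_neg hjmn, prv_of_not_mem hjS] at hQ
        by_cases himn : i = mn S
        · rw [if_pos himn, (prv_eq_mx_iff hS).2 himn] at hQ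
          have := base_sub_lt_one (mx S) j
          linarith
        · rw [if_neg himn] at hQ
          have hpi' : j < prv S i := base_lt_base.1 (by linarith)
          by_cases hiS : i ∈ S
          · have hpii : prv S i < i := by
              rcases prv_cases hiS with ⟨_, h2, _⟩ | ⟨_, hmin⟩
              · exact h2
              · exfalso
                apply himn
                rw [mn_eq hS]
                exact le_antisymm (Finset.le_min' S hS i (fun s hs => hmin s hs))
                  (Finset.min'_le S i hiS)
            exact absurd (lt_trans hpi' hpii) (not_lt.2 (le_of_lt hij))
          · rw [prv_of_not_mem hiS] at hpi'
            exact absurd (lt_trans hpi' hij) (lt_irrefl j)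
  · -- k ≥ 1 : impossible
    exfalso
    have hkq : (1:ℚ) ≤ (k:ℚ) := by exact_mod_cast hk
    have hu : base d i - base d j - (k:ℚ) < 0 := by linarith
    have hQ : 0 < (base d (prv S i) - (if i = mn S then (1:ℚ) else 0))
        - (base d (prv S j) - (if j = mn S then (1:ℚ) else 0)) - (k:ℚ) := by
      by_contra hcon
      push_neg at hcon
      nlinarith [hsep, hu, hcon]
    have hjmn : j = mn S := by
      by_contra hcon
      rw [if_neg hcon] at hQ
      have := hQub i
      have := hBp (prv S j)
      split_ifs at hQ <;> linarith [hBn (prv S i), hBp (prv S i)]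
    have himn : i ≠ mn S := fun hc => (ne_of_lt hij) (hc.trans hjmn.symm)
    have hiltmn : i < mn S := by rwa [← hjmn]
    have hiS : i ∉ S := fun hc => absurd (mn_le hS hc) (not_le.2 hiltmn)
    rw [if_neg himn, if_pos hjmn, prv_of_not_mem hiS,
      (prv_eq_mx_iff hS).2 hjmn] at hQ
    have : base d i < base d (mx S) :=
      base_lt_base.2 (lt_of_lt_of_le hiltmn (mn_le hS (mx_mem hS)))
    linarith

lemma crossing_sol {R : Fin d → Fin d → Prop}
    (hsym : ∀ {a b : Fin d}, R a b → R b a)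
    (htrans : ∀ {a b c : Fin d}, R a b → R b c → R a c)
    {S : Finset (Fin d)} (hS : S.Nonempty) {c₀ : Fin d} (hSc : ∀ s ∈ S, R s c₀)
    {i j : Fin d} {k : ℤ} (hij : i ≠ j) (hRij : R i j)
    (hsep : sepAt (act (ainv (xS S)) (base d)) (base d) (i, j, k)) :
    ∃ m, R m c₀ ∧ m ∉ S ∧ reflOf i j k = insRefl S m := by
  rcases lt_or_gt_of_ne hij with h | h
  · exact crossing_sol_lt (R := R) hsym htrans hS hSc h hRij hsep
  · have hsep' : sepAt (act (ainv (xS S)) (base d)) (base d) (j, i, -k) := by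
      rw [sepAt_flip]
      exact hsep
    obtain ⟨m, h1, h2, h3⟩ := crossing_sol_lt (R := R) (i := j) (j := i) (k := -k)
      hsym htrans hS hSc h (hsym hRij) hsep'
    exact ⟨m, h1, h2, (reflOf_flip hij k).trans h3⟩

end AffW
namespace AffW

variable {d : ℕ} [NeZero d]

/-- Master classification: the elements below `t_{e_{j₀}}` in the (relative) Bruhat
order are exactly the `xS S` for `j₀ ∈ S ⊆ (class of j₀)`. -/
theorem bleR_transl_iff {R : Fin d → Fin d → Prop}
    (hrefl : ∀ a, R a a)
    (hsym : ∀ {a b : Fin d}, R a b → R b a)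
    (htrans : ∀ {a b c : Fin d}, R a b → R b c → R a c)
    (j₀ : Fin d) (x : AffW d) :
    bleR R x (transl (Pi.single j₀ 1)) ↔
      ∃ S : Finset (Fin d), S.Nonempty ∧ j₀ ∈ S ∧ (∀ s ∈ S, R s j₀) ∧ x = xS S := by
  constructor
  · intro h
    unfold bleR at h
    induction h using Relation.ReflTransGen.head_induction_on with
    | refl =>
      exact ⟨{j₀}, Finset.singleton_nonempty j₀, Finset.mem_singleton_self j₀,
        fun s hs => (Finset.mem_singleton.1 hs) ▸ hrefl j₀, (xS_singleton j₀).symm⟩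
    | head h' _ ih =>
      obtain ⟨⟨r, hr, haeq⟩, hlen⟩ := h'
      obtain ⟨S, hS, hj, hRS, hceq⟩ := ih
      obtain ⟨i, j, k, hne, hRij, hwr, htr⟩ := hr
      have hreq : r = reflOf i j k := by
        ext a
        · show r.t a = (reflOf i j k).t a
          rw [htr]; rfl
        · show (r.w a : ℕ) = ((reflOf i j k).w a : ℕ)
          rw [hwr]; rfl
      rw [hceq] at haeq hlen
      rw [hreq] at haeq
      have hwS : ∀ a, R ((xS S).w a) a := by
        intro a
        by_cases ha : a ∈ S
        · exact htrans (hRS _ (prv_mem ha)) (hsym (hRS _ ha))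
        · show R (prv S a) a
          rw [prv_of_not_mem ha]
          exact hrefl a
      have hsepq : sepAt (act (ainv (xS S)) (base d)) (base d) (i, j, k) := by
        by_contra hcon
        have := crossing (R := R) hsym htrans hrefl (xS S) hwS hne hRij hcon
        rw [← haeq] at this
        exact absurd hlen (not_lt.2 this)
      obtain ⟨m, hRm, hmS, hre⟩ := crossing_sol (R := R) hsym htrans hS (c₀ := j₀)
        hRS hne hRij hsepq
      refine ⟨insert m S, ⟨m, Finset.mem_insert_self m S⟩, Finset.mem_insert_of_mem hj,
        ?_, ?_⟩
      · intro s hs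
        rcases Finset.mem_insert.1 hs with he | he
        · exact he ▸ hRm
        · exact hRS s he
      · rw [haeq, hre, xS_mul_ins hS hmS]
  · rintro ⟨S, hS, hj, hRS, rfl⟩
    -- strong induction on the cardinality of S
    suffices H : ∀ (n : ℕ) (S : Finset (Fin d)), S.card = n → S.Nonempty → j₀ ∈ S →
        (∀ s ∈ S, R s j₀) → bleR R (xS S) (transl (Pi.single j₀ 1)) by
      exact H S.card S rfl hS hj hRS
    intro n
    induction n using Nat.strong_induction_on with
    | _ n ih =>
      intro S hcard hS hj hRS
      by_cases hsing : S = {j₀}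
      · subst hsing
        rw [xS_singleton]
        exact Relation.ReflTransGen.refl
      · obtain ⟨m, hmS, hmne⟩ : ∃ m ∈ S, m ≠ j₀ := by
          by_contra hcon
          push_neg at hcon
          exact hsing (Finset.eq_singleton_iff_unique_mem.2 ⟨hj, hcon⟩)
        set S₀ := S.erase m with hS₀def
        have hS₀ : S₀.Nonempty := ⟨j₀, Finset.mem_erase.2 ⟨Ne.symm hmne, hj⟩⟩
        have hmS₀ : m ∉ S₀ := Finset.notMem_erase m S
        have hins : insert m S₀ = S := Finset.insert_erase hmS
        have hRS₀ : ∀ s ∈ S₀, R s j₀ := fun s hs => hRS s (Finset.mem_of_mem_erase hs)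
        have hstep : xS S = xS S₀ * insRefl S₀ m := by
          rw [xS_mul_ins hS₀ hmS₀, hins]
        have hsub : {i : Fin d | R i j₀ ∧ i ∉ S} ⊆ {i : Fin d | R i j₀ ∧ i ∉ S₀} := by
          rintro a ⟨h1, h2⟩
          exact ⟨h1, fun hc => h2 (Finset.mem_of_mem_erase hc)⟩
        have hlen : lenR R (xS S) < lenR R (xS S₀) := by
          rw [lenR_xS (R := R) hsym htrans hS (c₀ := j₀) hRS,
            lenR_xS (R := R) hsym htrans hS₀ (c₀ := j₀) hRS₀]
          apply Set.ncard_lt_ncard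
          · rw [Set.ssubset_iff_of_subset hsub]
            exact ⟨m, ⟨hRS m hmS, hmS₀⟩, fun hc => hc.2 hmS⟩
          · exact Set.toFinite _
        have hrfl : IsReflR R (insRefl S₀ m) := by
          refine ⟨m, partner S₀ m, (if mx S₀ < m then 1 else 0),
            partner_ne hS₀ hmS₀, ?_, rfl, rfl⟩
          exact htrans (hRS m hmS) (hsym (hRS₀ _ (partner_mem hS₀ hmS₀)))
        have hIH : bleR R (xS S₀) (transl (Pi.single j₀ 1)) :=
          ih S₀.card (by rw [hS₀def, ← hcard]; exact Finset.card_erase_lt_of_mem hmS)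
            S₀ rfl hS₀ (Finset.mem_erase.2 ⟨Ne.symm hmne, hj⟩) hRS₀
        exact Relation.ReflTransGen.head ⟨⟨insRefl S₀ m, hrfl, hstep⟩, hlen⟩ hIH

lemma ble_transl_iff (j₀ : Fin d) (x : AffW d) :
    ble x (transl (Pi.single j₀ 1)) ↔
      ∃ S : Finset (Fin d), S.Nonempty ∧ j₀ ∈ S ∧ x = xS S := by
  rw [show ble x (transl (Pi.single j₀ 1))
    = bleR (fun _ _ => True) x (transl (Pi.single j₀ 1)) from rfl,
    bleR_transl_iff (fun _ => trivial) (fun {_ _} _ => trivial)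
      (fun {_ _ _} _ _ => trivial) j₀ x]
  constructor
  · rintro ⟨S, h1, h2, _, h4⟩; exact ⟨S, h1, h2, h4⟩
  · rintro ⟨S, h1, h2, h4⟩; exact ⟨S, h1, h2, fun _ _ => trivial, h4⟩

lemma crit_xS {S : Finset (Fin d)} (hS : S.Nonempty) : crit (xS S) = ↑S := by
  ext j
  show ble (xS S) (transl (Pi.single j 1)) ↔ j ∈ (S : Set (Fin d))
  rw [ble_transl_iff]
  constructor
  · rintro ⟨S', h1, h2, h4⟩
    rw [xS_inj hS h1 h4]
    exact h2
  · intro hj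
    exact ⟨S, hS, hj, rfl⟩

lemma pact_single (σ : Equiv.Perm (Fin d)) (c : Fin d) :
    pact σ (Pi.single c 1) = Pi.single (σ c) (1:ℤ) := by
  funext i
  show (Pi.single c (1:ℤ) : Fin d → ℤ) (σ⁻¹ i) = (Pi.single (σ c) (1:ℤ) : Fin d → ℤ) i
  rw [Pi.single_apply, Pi.single_apply]
  congr 1
  simp only [eq_iff_iff]
  constructor
  · intro h
    rw [← h, Equiv.Perm.coe_inv, Equiv.apply_symm_apply]
  · intro h
    rw [h, Equiv.Perm.coe_inv, Equiv.symm_apply_apply]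

lemma mem_adm_iff (x : AffW d) :
    x ∈ Adm (mu0 d) ↔ ∃ S : Finset (Fin d), S.Nonempty ∧ x = xS S := by
  constructor
  · rintro ⟨σ, hble⟩
    rw [show mu0 d = Pi.single 0 1 from rfl, pact_single] at hble
    obtain ⟨S, h1, _, h4⟩ := (ble_transl_iff (σ 0) x).1 hble
    exact ⟨S, h1, h4⟩
  · rintro ⟨S, hS, rfl⟩
    obtain ⟨j₀, hj₀⟩ := hS
    refine ⟨Equiv.swap 0 j₀, ?_⟩
    rw [show mu0 d = Pi.single 0 1 from rfl, pact_single, Equiv.swap_apply_left]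
    exact (ble_transl_iff j₀ (xS S)).2 ⟨S, ⟨j₀, hj₀⟩, hj₀, rfl⟩

end AffW
open AffW in
/-- Let `M ⊆ GL_d` be the semistandard Levi subgroup corresponding to the partition
of `{1,…,d}` into the fibers of the block map `f : Fin d → Fin t`, and let
`ν = e_c ∈ W·μ₀` be the `M`-dominant element of its `W_M`-orbit (i.e. `c` is minimal
in its block). Then `Adm^G(O_ν) = { w ∈ Adm^G(μ₀) : S(w) ⊆ O_ν }` equals `Adm^M(ν)`,
the `ν`-admissible subset of the extended affine Weyl group of `M` (defined via the
Bruhat order from the `M`-antidominant base alcove whose closure contains the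
origin), where `O_ν` is the block of `c`. -/
theorem admG_orbit_eq_admM (d t : ℕ) [NeZero d] (f : Fin d → Fin t) (c : Fin d)
    (hdom : ∀ i, f i = f c → c ≤ i) :
    {w : AffW d | w ∈ Adm (mu0 d) ∧ crit w ⊆ {i | f i = f c}} =
      {x : AffW d | ∃ σ : Equiv.Perm (Fin d), (∀ i, f (σ i) = f i) ∧
        bleR (fun i j => f i = f j) x (transl (pact σ (Pi.single c 1)))} := by
  ext x
  simp only [Set.mem_setOf_eq]
  constructor
  · rintro ⟨hAdm, hcrit⟩
    obtain ⟨S, hS, rfl⟩ := (mem_adm_iff x).1 hAdm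
    have hfS : ∀ s ∈ S, f s = f c := by
      intro s hs
      apply hcrit
      rw [crit_xS hS]
      exact hs
    obtain ⟨j₀, hj₀⟩ := hS
    refine ⟨Equiv.swap c j₀, ?_, ?_⟩
    · intro i
      by_cases h1 : i = c
      · subst h1
        rw [Equiv.swap_apply_left]
        exact hfS j₀ hj₀
      · by_cases h2 : i = j₀
        · subst h2
          rw [Equiv.swap_apply_right]
          exact (hfS i hj₀).symm
        · rw [Equiv.swap_apply_of_ne_of_ne h1 h2]
    · rw [pact_single, Equiv.swap_apply_left]
      apply (bleR_transl_iff (R := fun i j => f i = f j) (fun _ => rfl)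
        (fun {_ _} h => h.symm) (fun {_ _ _} h1 h2 => h1.trans h2) j₀ _).2
      exact ⟨S, ⟨j₀, hj₀⟩, hj₀, fun s hs => (hfS s hs).trans (hfS j₀ hj₀).symm, rfl⟩
  · rintro ⟨σ, hσ, hble⟩
    rw [pact_single] at hble
    obtain ⟨S, hS, hj₀, hRS, rfl⟩ := (bleR_transl_iff (R := fun i j => f i = f j)
      (fun _ => rfl) (fun {_ _} h => h.symm) (fun {_ _ _} h1 h2 => h1.trans h2)
      (σ c) x).1 hble
    have hfc : f (σ c) = f c := hσ c
    have hfS : ∀ s ∈ S, f s = f c := fun s hs => (hRS s hs).trans hfc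
    constructor
    · exact (mem_adm_iff _).2 ⟨S, hS, rfl⟩
    · intro j hj
      rw [crit_xS hS] at hj
      exact hfS j hj
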